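/- arXiv:1207.3397 — 11 statements merged into one kernel-verified Lean document; each statement's English description precedes it below -/
import Mathlib

section
/- For the k-cube graph Q_k with k ≥ 5 and every positive integer d, the d-biclique covering number satisfies bc_d(Q_k) = d·2^(k-1). -/
open Finset

/-- `X, Y` form a biclique (complete bipartite subgraph) of `G`. -/
def SimpleGraph.IsBiclique {V : Type*} (G : SimpleGraph V) (X Y : Finset V) : Prop :=
  Disjoint X Y ∧ ∀ x ∈ X, ∀ y ∈ Y, G.Adj x y

/-- `L` is a `d`-biclique cover of `G`: a list (multiset, repetition allowed) of bicliques
covering every edge at least `d` times. -/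
def SimpleGraph.IsBicliqueCover {V : Type*} [DecidableEq V] (G : SimpleGraph V) (d : ℕ)
    (L : List (Finset V × Finset V)) : Prop :=
  (∀ p ∈ L, G.IsBiclique p.1 p.2) ∧
  ∀ e ∈ G.edgeSet, d ≤ L.countP (fun p => decide (∃ x ∈ p.1, ∃ y ∈ p.2, e = s(x, y)))

/-- The `d`-biclique covering number `bc_d(G)`. -/
noncomputable def SimpleGraph.bcd {V : Type*} [DecidableEq V] (G : SimpleGraph V) (d : ℕ) : ℕ :=
  sInf {n | ∃ L, G.IsBicliqueCover d L ∧ L.length = n}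

/-- `B(G)`: the maximum number of edges among the bicliques of `G`. -/
noncomputable def SimpleGraph.bicliqueMax {V : Type*} (G : SimpleGraph V) : ℕ :=
  sSup {n | ∃ X Y, G.IsBiclique X Y ∧ n = X.card * Y.card}
/-- The `k`-cube graph `Q_k`: vertices are `k`-tuples of bits, adjacent iff they
differ in exactly one coordinate. -/
def cubeGraph (k : ℕ) : SimpleGraph (Fin k → Bool) where
  Adj x y := (Finset.univ.filter fun i => x i ≠ y i).card = 1
  symm := ⟨by intro x y h; simpa [ne_comm] using h⟩
  loopless := ⟨by intro x h; simp at h⟩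


namespace CubeAux
variable {k : ℕ}

instance : DecidableRel (cubeGraph k).Adj :=
  fun x y => inferInstanceAs (Decidable ((Finset.univ.filter fun i => x i ≠ y i).card = 1))

def flip (x : Fin k → Bool) (i : Fin k) : Fin k → Bool := Function.update x i (!x i)

def D (x y : Fin k → Bool) : Finset (Fin k) := univ.filter (fun i => x i ≠ y i)

lemma adj_iff {x y : Fin k → Bool} : (cubeGraph k).Adj x y ↔ (D x y).card = 1 := Iff.rfl

lemma D_flip (x : Fin k → Bool) (i : Fin k) : D x (flip x i) = {i} := by
  ext j
  simp only [D, mem_filter, mem_univ, true_and, mem_singleton]; simp only [flip]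
  rcases eq_or_ne j i with rfl | h
  · simp
  · simp [Function.update_of_ne h, h]

lemma adj_flip (x : Fin k → Bool) (i : Fin k) : (cubeGraph k).Adj x (flip x i) := by
  rw [adj_iff, D_flip]; simp

lemma adj_iff_flip {x y : Fin k → Bool} : (cubeGraph k).Adj x y ↔ ∃ i, y = flip x i := by
  constructor
  · intro h
    rw [adj_iff, Finset.card_eq_one] at h
    obtain ⟨i, hi⟩ := h
    refine ⟨i, funext fun j => ?_⟩
    rcases eq_or_ne j i with rfl | hj
    · have : j ∈ D x y := hi ▸ mem_singleton_self j
      simp only [D, mem_filter] at this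
      have := this.2
      simp [flip]
      revert this
      cases x j <;> cases y j <;> simp
    · have : j ∉ D x y := by rw [hi]; simpa using hj
      simp only [D, mem_filter, mem_univ, true_and, not_not] at this
      simp [flip, Function.update_of_ne hj, ← this]
  · rintro ⟨i, rfl⟩; exact adj_flip x i

lemma flip_injective (x : Fin k → Bool) : Function.Injective (flip x) := by
  intro i j h
  by_contra hij
  have := congrFun h i
  simp only [flip, Function.update_of_ne hij, Function.update_self] at this
  exact Bool.not_ne_self (x i) this


lemma neighborFinset_eq (x : Fin k → Bool) :
    (cubeGraph k).neighborFinset x = univ.image (flip x) := by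
  ext y
  simp [SimpleGraph.mem_neighborFinset, adj_iff_flip, eq_comm]

lemma card_neighbor (x : Fin k → Bool) : ((cubeGraph k).neighborFinset x).card = k := by
  rw [neighborFinset_eq, Finset.card_image_of_injective _ (flip_injective x)]
  simp

lemma D_symmDiff (x y z : Fin k → Bool) : D x z = symmDiff (D x y) (D y z) := by
  ext j
  simp only [D, Finset.mem_symmDiff, mem_filter, mem_univ, true_and]
  cases hx : x j <;> cases hy : y j <;> cases hz : z j <;> simp

lemma D_comm (x y : Fin k → Bool) : D x y = D y x := by
  ext j; simp [D, ne_comm]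

lemma common_neighbor {y y' z : Fin k → Bool} (hyy' : y ≠ y')
    (h1 : (cubeGraph k).Adj y z) (h2 : (cubeGraph k).Adj y' z) :
    z ∈ (D y y').image (flip y) ∧ (D y y').card ≤ 2 := by
  obtain ⟨i, rfl⟩ := adj_iff_flip.mp h1
  have h2' : (D y' (flip y i)).card = 1 := adj_iff.mp h2
  obtain ⟨j, hj⟩ := Finset.card_eq_one.mp h2'
  have hD : D y y' = symmDiff {i} ({j} : Finset (Fin k)) := by
    rw [D_symmDiff y (flip y i) y', D_flip, D_comm, hj]
  have hij : i ≠ j := by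
    rintro rfl
    apply hyy'
    have : D y y' = ∅ := by rw [hD, symmDiff_self]; rfl
    funext j'
    by_contra hne
    have : j' ∈ D y y' := by simp [D, hne]
    simp_all
  have hDval : D y y' = {i, j} := by
    rw [hD]
    ext a
    simp only [Finset.mem_symmDiff, mem_singleton, mem_insert]
    constructor
    · rintro (⟨rfl, -⟩ | ⟨rfl, -⟩) <;> simp
    · rintro (rfl | rfl)
      · exact Or.inl ⟨rfl, hij⟩
      · exact Or.inr ⟨rfl, fun h => hij h.symm⟩
  constructor
  · rw [hDval]
    exact Finset.mem_image.mpr ⟨i, by simp, rfl⟩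
  · rw [hDval]
    exact (Finset.card_insert_le _ _).trans (by simp)

lemma card_le_of_adj_pair {X : Finset (Fin k → Bool)} {y y' : Fin k → Bool} (hyy' : y ≠ y')
    (h : ∀ z ∈ X, (cubeGraph k).Adj y z ∧ (cubeGraph k).Adj y' z) : X.card ≤ 2 := by
  have hsub : X ⊆ (D y y').image (flip y) := by
    intro z hz
    exact (common_neighbor hyy' (h z hz).1 (h z hz).2).1
  rcases X.eq_empty_or_nonempty with rfl | ⟨z, hz⟩
  · simp
  · calc X.card ≤ ((D y y').image (flip y)).card := Finset.card_le_card hsub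
      _ ≤ (D y y').card := Finset.card_image_le
      _ ≤ 2 := (common_neighbor hyy' (h z hz).1 (h z hz).2).2

lemma star_card {x : Fin k → Bool} {Y : Finset (Fin k → Bool)}
    (h : ∀ y ∈ Y, (cubeGraph k).Adj x y) : Y.card ≤ k := by
  have : Y ⊆ (cubeGraph k).neighborFinset x := by
    intro y hy; rw [SimpleGraph.mem_neighborFinset]; exact h y hy
  calc Y.card ≤ _ := Finset.card_le_card this
    _ = k := card_neighbor x

lemma biclique_card (hk : 4 ≤ k) {X Y : Finset (Fin k → Bool)}
    (h : (cubeGraph k).IsBiclique X Y) : X.card * Y.card ≤ k := by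
  obtain ⟨-, hadj⟩ := h
  by_cases hX : X.card ≤ 1
  · rcases Finset.card_le_one.mp hX with hX1
    rcases X.eq_empty_or_nonempty with rfl | ⟨x, hx⟩
    · simp
    · have hXc : X.card ≤ 1 := hX
      have : Y.card ≤ k := star_card (fun y hy => hadj x hx y hy)
      nlinarith [X.card.zero_le]
  · by_cases hY : Y.card ≤ 1
    · rcases Y.eq_empty_or_nonempty with rfl | ⟨y, hy⟩
      · simp
      · have : X.card ≤ k := star_card (x := y) (fun x hx => ((cubeGraph k).adj_symm (hadj x hx y hy)))
        nlinarith [Y.card.zero_le]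
    · push_neg at hX hY
      obtain ⟨y, hy, y', hy', hne⟩ := Finset.one_lt_card.mp hY
      obtain ⟨x, hx, x', hx', hnex⟩ := Finset.one_lt_card.mp hX
      have hXle : X.card ≤ 2 := card_le_of_adj_pair hne
        (fun z hz => ⟨(cubeGraph k).adj_symm (hadj z hz y hy), (cubeGraph k).adj_symm (hadj z hz y' hy')⟩)
      have hYle : Y.card ≤ 2 := card_le_of_adj_pair hnex
        (fun z hz => ⟨hadj x hx z hz, hadj x' hx' z hz⟩)
      nlinarith

lemma sum_countP {α β : Type*} (S : Finset α) (P : α → β → Bool) (L : List β) :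
    ∑ e ∈ S, L.countP (P e) = (L.map (fun b => (S.filter (fun e => P e b)).card)).sum := by
  induction L with
  | nil => simp
  | cons a l ih =>
    simp only [List.countP_cons, List.map_cons, List.sum_cons, Finset.sum_add_distrib, ih]
    rw [add_comm]
    congr 1
    rw [Finset.card_filter]

lemma covered_le {V : Type*} [DecidableEq V] (S : Finset (Sym2 V)) (X Y : Finset V) :
    (S.filter (fun e => ∃ x ∈ X, ∃ y ∈ Y, e = s(x, y))).card ≤ X.card * Y.card := by
  have hsub : S.filter (fun e => ∃ x ∈ X, ∃ y ∈ Y, e = s(x, y)) ⊆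
      (X ×ˢ Y).image (fun q => s(q.1, q.2)) := by
    intro e he
    simp only [mem_filter] at he
    obtain ⟨-, x, hx, y, hy, rfl⟩ := he
    exact Finset.mem_image.mpr ⟨(x, y), Finset.mem_product.mpr ⟨hx, hy⟩, rfl⟩
  calc _ ≤ _ := Finset.card_le_card hsub
    _ ≤ (X ×ˢ Y).card := Finset.card_image_le
    _ = X.card * Y.card := Finset.card_product X Y

def wt (x : Fin k → Bool) : ℕ := (univ.filter (fun i => x i = true)).card

lemma flip_flip (x : Fin k → Bool) (i : Fin k) : flip (flip x i) i = x := by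
  funext j
  rcases eq_or_ne j i with rfl | h
  · simp [flip]
  · simp [flip, Function.update_of_ne h]

lemma parity_flip (x : Fin k → Bool) (i : Fin k) : Even (wt (flip x i)) ↔ ¬ Even (wt x) := by
  cases hxi : x i
  · have hfil : (univ.filter (fun j => flip x i j = true)) =
        insert i (univ.filter (fun j => x j = true)) := by
      ext j
      rcases eq_or_ne j i with rfl | h
      · simp [flip, hxi]
      · simp only [mem_filter]; simp [flip, Function.update_of_ne h, h]
    have hnot : i ∉ univ.filter (fun j => x j = true) := by simp [hxi]
    have : wt (flip x i) = wt x + 1 := by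
      rw [wt, wt, hfil, Finset.card_insert_of_notMem hnot]
    rw [this, Nat.even_add_one]
  · have hfil : (univ.filter (fun j => flip x i j = true)) =
        (univ.filter (fun j => x j = true)).erase i := by
      ext j
      rcases eq_or_ne j i with rfl | h
      · simp [flip, hxi]
      · simp only [mem_filter]; simp [flip, Function.update_of_ne h, h]
    have hmem : i ∈ univ.filter (fun j => x j = true) := by simp [hxi]
    have : wt x = wt (flip x i) + 1 := by
      rw [wt, wt, hfil, Finset.card_erase_add_one hmem]
    rw [this, Nat.even_add_one, not_not]

lemma even_card (hk : 1 ≤ k) :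
    (univ.filter (fun x : Fin k → Bool => Even (wt x))).card = 2 ^ (k - 1) := by
  set i0 : Fin k := ⟨0, hk⟩
  have hcards : (univ.filter (fun x : Fin k → Bool => Even (wt x))).card =
      (univ.filter (fun x : Fin k → Bool => ¬ Even (wt x))).card := by
    apply Finset.card_bij' (fun x _ => flip x i0) (fun x _ => flip x i0)
    · intro x hx
      simp only [mem_filter, mem_univ, true_and] at hx ⊢
      rw [parity_flip]; simpa using hx
    · intro x hx
      simp only [mem_filter, mem_univ, true_and] at hx ⊢
      rw [parity_flip]; exact hx
    · intro x _; exact flip_flip x i0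
    · intro x _; exact flip_flip x i0
  have hsum := Finset.card_filter_add_card_filter_not
    (s := (univ : Finset (Fin k → Bool))) (p := fun x => Even (wt x))
  have huniv : (univ : Finset (Fin k → Bool)).card = 2 ^ k := by
    simp [Finset.card_univ]
  have h2 : 2 ^ k = 2 * 2 ^ (k - 1) := by
    rw [← pow_succ']
    congr 1
    omega
  omega

lemma degree_eq (x : Fin k → Bool) : (cubeGraph k).degree x = k := card_neighbor x

lemma edge_count : 2 * (cubeGraph k).edgeFinset.card = k * 2 ^ k := by
  have h := SimpleGraph.sum_degrees_eq_twice_card_edges (cubeGraph k)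
  rw [Finset.sum_congr rfl (fun x _ => degree_eq x)] at h
  simp only [Finset.sum_const, Finset.card_univ, smul_eq_mul] at h
  have huniv : Fintype.card (Fin k → Bool) = 2 ^ k := by simp
  rw [huniv] at h
  rw [← h]; ring

noncomputable def starsList (k : ℕ) : List (Finset (Fin k → Bool) × Finset (Fin k → Bool)) :=
  ((univ.filter (fun x : Fin k → Bool => Even (wt x))).toList).map
    (fun x => ({x}, (cubeGraph k).neighborFinset x))

lemma starsList_length (hk : 1 ≤ k) : (starsList k).length = 2 ^ (k - 1) := by
  rw [starsList, List.length_map, Finset.length_toList, even_card hk]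

lemma lower_bound (hk : 4 ≤ k) {d : ℕ} {L : List (Finset (Fin k → Bool) × Finset (Fin k → Bool))}
    (hL : (cubeGraph k).IsBicliqueCover d L) :
    d * (cubeGraph k).edgeFinset.card ≤ L.length * k := by
  classical
  obtain ⟨hbic, hcov⟩ := hL
  set S := (cubeGraph k).edgeFinset with hS
  set P : Sym2 (Fin k → Bool) → (Finset (Fin k → Bool) × Finset (Fin k → Bool)) → Bool :=
    fun e p => decide (∃ x ∈ p.1, ∃ y ∈ p.2, e = s(x, y)) with hP
  have h1 : d * S.card ≤ ∑ e ∈ S, L.countP (P e) := by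
    calc d * S.card = ∑ _e ∈ S, d := by rw [Finset.sum_const, smul_eq_mul, mul_comm]
      _ ≤ _ := Finset.sum_le_sum (fun e he => hcov e (by rwa [SimpleGraph.mem_edgeFinset] at he))
  have h2 : ∑ e ∈ S, L.countP (P e) =
      (L.map (fun b => (S.filter (fun e => P e b)).card)).sum := sum_countP S P L
  have h3 : (L.map (fun b => (S.filter (fun e => P e b)).card)).sum ≤ L.length * k := by
    have hb : ∀ c ∈ (L.map (fun b => (S.filter (fun e => P e b)).card)), c ≤ k := by
      intro c hc
      obtain ⟨p, hp, rfl⟩ := List.mem_map.mp hc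
      have hfil : (S.filter (fun e => P e p)) =
        (S.filter (fun e => ∃ x ∈ p.1, ∃ y ∈ p.2, e = s(x, y))) := by
        apply Finset.filter_congr
        intro e _
        simp [hP]
      rw [hfil]
      calc _ ≤ p.1.card * p.2.card := covered_le S p.1 p.2
        _ ≤ k := biclique_card hk (hbic p hp)
    have := List.sum_le_card_nsmul _ k hb
    simpa using this
  omega

lemma star_covers (hk : 1 ≤ k) {u v : Fin k → Bool} (huv : (cubeGraph k).Adj u v)
    (hu : Even (wt u)) :
    1 ≤ (starsList k).countP (fun p => decide (∃ x ∈ p.1, ∃ y ∈ p.2, s(u, v) = s(x, y))) := by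
  rw [Nat.succ_le_iff, List.countP_pos_iff]
  refine ⟨({u}, (cubeGraph k).neighborFinset u), ?_, ?_⟩
  · exact List.mem_map.mpr ⟨u, Finset.mem_toList.mpr (by simp [hu]), rfl⟩
  · simp only [decide_eq_true_eq]
    exact ⟨u, by simp, v, (SimpleGraph.mem_neighborFinset _ _ _).mpr huv, rfl⟩

lemma stars_cover (hk : 1 ≤ k) (d : ℕ) :
    (cubeGraph k).IsBicliqueCover d ((List.replicate d (starsList k)).flatten) := by
  constructor
  · intro p hp
    rw [List.mem_flatten] at hp
    obtain ⟨l, hl, hp⟩ := hp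
    rw [List.mem_replicate] at hl
    rw [hl.2] at hp
    obtain ⟨x, hx, rfl⟩ := List.mem_map.mp hp
    constructor
    · rw [Finset.disjoint_left]
      intro a ha hb
      rw [Finset.mem_singleton] at ha
      subst ha
      exact (cubeGraph k).irrefl ((SimpleGraph.mem_neighborFinset _ _ _).mp hb)
    · intro a ha y hy
      rw [Finset.mem_singleton] at ha
      subst ha
      exact (SimpleGraph.mem_neighborFinset _ _ _).mp hy
  · intro e he
    induction e with
    | _ u v =>
      rw [SimpleGraph.mem_edgeSet] at he
      have hcount : ∀ p, ((List.replicate d (starsList k)).flatten).countP p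
          = d * (starsList k).countP p := by
        intro p
        rw [List.countP_flatten, List.map_replicate, List.sum_replicate, smul_eq_mul]
      rw [hcount]
      have h1 : 1 ≤ (starsList k).countP
          (fun p => decide (∃ x ∈ p.1, ∃ y ∈ p.2, s(u, v) = s(x, y))) := by
        by_cases hu : Even (wt u)
        · exact star_covers hk he hu
        · obtain ⟨i, rfl⟩ := adj_iff_flip.mp he
          have hv : Even (wt (flip u i)) := (parity_flip u i).mpr hu
          have := star_covers hk ((cubeGraph k).adj_symm he) hv
          rw [Sym2.eq_swap]
          exact this
      calc d = d * 1 := (mul_one d).symm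
        _ ≤ _ := Nat.mul_le_mul_left d h1

end CubeAux

open CubeAux in
theorem stmt_1 (k : ℕ) (hk : 5 ≤ k) (d : ℕ) (hd : 0 < d) :
    (cubeGraph k).bcd d = d * 2 ^ (k - 1) := by
  have hk1 : 1 ≤ k := by omega
  have hk4 : 4 ≤ k := by omega
  have hlen : ((List.replicate d (starsList k)).flatten).length = d * 2 ^ (k - 1) := by
    rw [List.length_flatten]
    simp [starsList_length hk1]
  have hmem : d * 2 ^ (k - 1) ∈
      {n | ∃ L, (cubeGraph k).IsBicliqueCover d L ∧ L.length = n} :=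
    ⟨_, stars_cover hk1 d, hlen⟩
  have h2 : (2 : ℕ) ^ k = 2 * 2 ^ (k - 1) := by
    rw [← pow_succ']
    congr 1
    omega
  have hE : (cubeGraph k).edgeFinset.card = k * 2 ^ (k - 1) := by
    have he : 2 * (cubeGraph k).edgeFinset.card = 2 * (k * 2 ^ (k - 1)) := by
      rw [edge_count, h2]; ring
    exact Nat.eq_of_mul_eq_mul_left (by norm_num) he
  apply le_antisymm
  · exact Nat.sInf_le hmem
  · apply le_csInf ⟨_, hmem⟩
    rintro n ⟨L', hL', rfl⟩
    have h := lower_bound hk4 hL'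
    rw [hE] at h
    have h' : (d * 2 ^ (k - 1)) * k ≤ L'.length * k := by
      calc (d * 2 ^ (k - 1)) * k = d * (k * 2 ^ (k - 1)) := by ring
        _ ≤ L'.length * k := h
    exact Nat.le_of_mul_le_mul_right h' (by omega)
end

section
/- For k ≥ 5, every biclique (complete bipartite subgraph) of the k-cube Q_k has at most k edges, i.e., the maximum biclique of Q_k is a star with k edges. -/
open Finset

lemma cube_adj_update {k : ℕ} {x y : Fin k → Bool} (h : (cubeGraph k).Adj x y) :
    ∃ i, y i ≠ x i ∧ y = Function.update x i (!(x i)) := by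
  obtain ⟨i, hi⟩ := Finset.card_eq_one.mp h
  have hmem : ∀ j, x j ≠ y j ↔ j = i := fun j => by
    rw [show (j = i) ↔ j ∈ ({i} : Finset (Fin k)) from (Finset.mem_singleton).symm, ← hi]
    simp
  have hyi : y i ≠ x i := fun hh => ((hmem i).mpr rfl) hh.symm
  refine ⟨i, hyi, funext fun j => ?_⟩
  by_cases hj : j = i
  · subst hj
    simp only [Function.update_self]
    cases hx : x j <;> cases hy : y j <;> simp_all
  · have : x j = y j := by
      by_contra hc; exact hj ((hmem j).mp hc)
    simp [Function.update_of_ne hj, this]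

lemma cube_deg_le {k : ℕ} (x : Fin k → Bool) (Y : Finset (Fin k → Bool))
    (h : ∀ y ∈ Y, (cubeGraph k).Adj x y) : Y.card ≤ k := by
  have hsub : Y ⊆ Finset.univ.image (fun i => Function.update x i (!(x i))) := by
    intro y hy
    obtain ⟨i, _, hupd⟩ := cube_adj_update (h y hy)
    exact Finset.mem_image.mpr ⟨i, Finset.mem_univ i, hupd.symm⟩
  calc Y.card ≤ _ := Finset.card_le_card hsub
    _ ≤ (Finset.univ : Finset (Fin k)).card := Finset.card_image_le
    _ = k := by simp

lemma cube_common_le_two {k : ℕ} {x1 x2 : Fin k → Bool} (hne : x1 ≠ x2)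
    (Y : Finset (Fin k → Bool))
    (h1 : ∀ y ∈ Y, (cubeGraph k).Adj x1 y) (h2 : ∀ y ∈ Y, (cubeGraph k).Adj x2 y) :
    Y.card ≤ 2 := by
  rcases Y.eq_empty_or_nonempty with rfl | ⟨y0, hy0⟩
  · simp
  set D := Finset.univ.filter (fun i => x1 i ≠ x2 i) with hD
  have hDcard : D.card ≤ 2 := by
    obtain ⟨i, _, hu1⟩ := cube_adj_update (h1 y0 hy0)
    obtain ⟨j, _, hu2⟩ := cube_adj_update (h2 y0 hy0)
    have hsub : D ⊆ {i, j} := by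
      intro m hm
      simp only [hD, Finset.mem_filter] at hm
      by_contra hc
      simp only [Finset.mem_insert, Finset.mem_singleton] at hc
      push_neg at hc
      have e1 : y0 m = x1 m := by rw [hu1]; simp [Function.update_of_ne hc.1]
      have e2 : y0 m = x2 m := by rw [hu2]; simp [Function.update_of_ne hc.2]
      exact hm.2 (e1.symm.trans e2)
    calc D.card ≤ ({i, j} : Finset (Fin k)).card := Finset.card_le_card hsub
      _ ≤ 2 := Finset.card_insert_le i {j} |>.trans (by simp)
  have hsub : Y ⊆ D.image (fun i => Function.update x1 i (!(x1 i))) := by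
    intro y hy
    obtain ⟨i, hyi, hu1⟩ := cube_adj_update (h1 y hy)
    refine Finset.mem_image.mpr ⟨i, ?_, hu1.symm⟩
    simp only [hD, Finset.mem_filter, Finset.mem_univ, true_and]
    intro heq
    obtain ⟨j, hyj, hu2⟩ := cube_adj_update (h2 y hy)
    have hij : i = j := by
      by_contra hc
      have : y i = x2 i := by rw [hu2]; simp [Function.update_of_ne hc]
      exact hyi (this.trans heq.symm)
    obtain ⟨m, hm⟩ : ∃ m, x1 m ≠ x2 m := by
      by_contra hc; push_neg at hc; exact hne (funext hc)
    have hmi : m ≠ i := fun hmi => hm (hmi ▸ heq)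
    have em1 : y m = x1 m := by rw [hu1]; simp [Function.update_of_ne hmi]
    have em2 : y m = x2 m := by rw [hu2]; simp [Function.update_of_ne (hij ▸ hmi)]
    exact hm (em1.symm.trans em2)
  calc Y.card ≤ _ := Finset.card_le_card hsub
    _ ≤ D.card := Finset.card_image_le
    _ ≤ 2 := hDcard

theorem stmt_2 (k : ℕ) (hk : 5 ≤ k) (X Y : Finset (Fin k → Bool))
    (h : (cubeGraph k).IsBiclique X Y) : X.card * Y.card ≤ k := by
  obtain ⟨hdisj, hadj⟩ := h
  rcases X.eq_empty_or_nonempty with rfl | ⟨x0, hx0⟩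
  · simp
  rcases Y.eq_empty_or_nonempty with rfl | ⟨y0, hy0⟩
  · simp
  rcases le_or_gt X.card 1 with hX | hX
  · have hYk : Y.card ≤ k := cube_deg_le x0 Y (fun y hy => hadj x0 hx0 y hy)
    calc X.card * Y.card ≤ 1 * Y.card := Nat.mul_le_mul_right _ hX
      _ = Y.card := one_mul _
      _ ≤ k := hYk
  rcases le_or_gt Y.card 1 with hY | hY
  · have hXk : X.card ≤ k := cube_deg_le y0 X (fun x hx => (hadj x hx y0 hy0).symm)
    calc X.card * Y.card ≤ X.card * 1 := Nat.mul_le_mul_left _ hY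
      _ = X.card := mul_one _
      _ ≤ k := hXk
  · obtain ⟨x1, hx1, x2, hx2, hxne⟩ := Finset.one_lt_card.mp hX
    obtain ⟨y1, hy1, y2, hy2, hyne⟩ := Finset.one_lt_card.mp hY
    have hY2 : Y.card ≤ 2 := cube_common_le_two hxne Y
      (fun y hy => hadj x1 hx1 y hy) (fun y hy => hadj x2 hx2 y hy)
    have hX2 : X.card ≤ 2 := cube_common_le_two hyne X
      (fun x hx => (hadj x hx y1 hy1).symm) (fun x hx => (hadj x hx y2 hy2).symm)
    calc X.card * Y.card ≤ 2 * 2 := Nat.mul_le_mul hX2 hY2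
      _ ≤ k := by omega
end

section
/- For every positive integer d and even n ≥ 6, bc_d(C_n) = dn/2, where C_n is the cycle on n vertices. -/
open Finset

section Aux
open SimpleGraph
open Fin.CommRing Fin.NatCast

variable {m : ℕ}

lemma cyc_adj {u v : Fin (m+6)} :
    (cycleGraph (m+6)).Adj u v ↔ v = u + 1 ∨ v = u - 1 := by
  rw [cycleGraph_adj]
  constructor
  · rintro (h | h)
    · right; linear_combination -h
    · left; linear_combination h
  · rintro (rfl | rfl)
    · right; ring
    · left; ring

lemma fourNeZero : (4 : Fin (m+6)) ≠ 0 := by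
  intro h
  rw [show (4 : Fin (m+6)) = ((4:ℕ) : Fin (m+6)) by norm_cast, Fin.natCast_eq_zero] at h
  exact absurd (Nat.le_of_dvd (by norm_num) h) (by omega)

lemma no_k22 {x1 x2 y1 y2 : Fin (m+6)} (hx : x1 ≠ x2) (hy : y1 ≠ y2)
    (h11 : (cycleGraph (m+6)).Adj x1 y1) (h12 : (cycleGraph (m+6)).Adj x1 y2)
    (h21 : (cycleGraph (m+6)).Adj x2 y1) (h22 : (cycleGraph (m+6)).Adj x2 y2) : False := by
  rw [cyc_adj] at h11 h12 h21 h22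
  rcases h11 with rfl | rfl <;> rcases h12 with rfl | rfl <;>
    rcases h21 with h21 | h21 <;> rcases h22 with h22 | h22 <;>
      first
        | exact hy rfl
        | exact hx (by linear_combination h21)
        | exact hx (by linear_combination h22)
        | exact hx (by linear_combination -h21)
        | exact hx (by linear_combination -h22)
        | exact fourNeZero (m := m) (by linear_combination h21 - h22)
        | exact fourNeZero (m := m) (by linear_combination h22 - h21)

lemma nbr_sub {X Y : Finset (Fin (m+6))} (h : (cycleGraph (m+6)).IsBiclique X Y)
    {y : Fin (m+6)} (hy : y ∈ Y) : X ⊆ {y - 1, y + 1} := by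
  intro x hx
  rcases cyc_adj.mp ((h.2 x hx y hy).symm) with rfl | rfl <;> simp

lemma biclique_card_le {X Y : Finset (Fin (m+6))}
    (h : (cycleGraph (m+6)).IsBiclique X Y) : X.card * Y.card ≤ 2 := by
  by_contra hgt
  push_neg at hgt
  have hY0 : Y.Nonempty := by
    rw [← Finset.card_pos]; by_contra h0; push_neg at h0
    interval_cases hc : Y.card <;> simp_all
  have hX0 : X.Nonempty := by
    rw [← Finset.card_pos]; by_contra h0; push_neg at h0
    interval_cases hc : X.card <;> simp_all
  obtain ⟨y, hy⟩ := hY0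
  obtain ⟨x, hx⟩ := hX0
  have hXle : X.card ≤ 2 :=
    le_trans (Finset.card_le_card (nbr_sub h hy)) (le_trans (Finset.card_insert_le _ _) (by simp))
  have hYsym : (cycleGraph (m+6)).IsBiclique Y X :=
    ⟨h.1.symm, fun a ha b hb => (h.2 b hb a ha).symm⟩
  have hYle : Y.card ≤ 2 :=
    le_trans (Finset.card_le_card (nbr_sub hYsym hx)) (le_trans (Finset.card_insert_le _ _) (by simp))
  have hX2 : X.card = 2 := by nlinarith
  have hY2 : Y.card = 2 := by nlinarith
  obtain ⟨x1, x2, hx12, rfl⟩ := Finset.card_eq_two.mp hX2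
  obtain ⟨y1, y2, hy12, rfl⟩ := Finset.card_eq_two.mp hY2
  exact no_k22 hx12 hy12
    (h.2 x1 (by simp) y1 (by simp)) (h.2 x1 (by simp) y2 (by simp))
    (h.2 x2 (by simp) y1 (by simp)) (h.2 x2 (by simp) y2 (by simp))

lemma sum_countP {α β : Type*} [DecidableEq α] (E : Finset α) (P : α → β → Bool)
    (L : List β) :
    ∑ e ∈ E, (L.countP (P e)) = (L.map (fun p => (E.filter (fun e => P e p = true)).card)).sum := by
  induction L with
  | nil => simp
  | cons a L ih =>
    simp only [List.countP_cons, List.map_cons, List.sum_cons, Finset.sum_add_distrib, ih,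
      Finset.card_filter]
    ring

lemma edge_form {e : Sym2 (Fin (m+6))} (he : e ∈ (cycleGraph (m+6)).edgeSet) :
    ∃ u : Fin (m+6), e = s(u, u + 1) := by
  induction e with
  | h a b =>
    rw [SimpleGraph.mem_edgeSet] at he
    rcases cyc_adj.mp he with rfl | rfl
    · exact ⟨a, rfl⟩
    · exact ⟨a - 1, by rw [sub_add_cancel]; exact Sym2.eq_swap⟩

lemma countP_join_replicate {β : Type*} (d : ℕ) (L : List β) (p : β → Bool) :
    ((List.replicate d L).flatten).countP p = d * L.countP p := by
  induction d with
  | zero => simp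
  | succ k ih => simp [List.replicate_succ, List.countP_append, ih, Nat.succ_mul, Nat.add_comm]

lemma covered_le {X Y : Finset (Fin (m+6))} (h : (cycleGraph (m+6)).IsBiclique X Y)
    (E : Finset (Sym2 (Fin (m+6)))) :
    (E.filter (fun e => decide (∃ x ∈ X, ∃ y ∈ Y, e = s(x, y)) = true)).card ≤ 2 := by
  have hsub : E.filter (fun e => decide (∃ x ∈ X, ∃ y ∈ Y, e = s(x, y)) = true)
      ⊆ (X ×ˢ Y).image (fun q => s(q.1, q.2)) := by
    intro e he
    rw [Finset.mem_filter] at he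
    simp only [decide_eq_true_eq] at he
    obtain ⟨-, x, hx, y, hy, rfl⟩ := he
    exact Finset.mem_image.mpr ⟨(x, y), Finset.mem_product.mpr ⟨hx, hy⟩, rfl⟩
  calc _ ≤ ((X ×ˢ Y).image (fun q : _ × _ => s(q.1, q.2))).card := Finset.card_le_card hsub
    _ ≤ (X ×ˢ Y).card := Finset.card_image_le
    _ = X.card * Y.card := Finset.card_product X Y
    _ ≤ 2 := biclique_card_le h

lemma edge_card : (cycleGraph (m+6)).edgeFinset.card = m + 6 := by
  have h2 := SimpleGraph.sum_degrees_eq_twice_card_edges (cycleGraph (m+6))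
  have hdeg : ∀ v : Fin (m+6), (cycleGraph (m+6)).degree v = 2 := fun v =>
    cycleGraph_degree_three_le (n := m+3) (v := v)
  simp only [hdeg, Finset.sum_const, Finset.card_univ, Fintype.card_fin, smul_eq_mul] at h2
  omega

lemma lower_bnd {d t : ℕ} (ht : m + 6 = t + t) {L : List (Finset (Fin (m+6)) × Finset (Fin (m+6)))}
    (hL : (cycleGraph (m+6)).IsBicliqueCover d L) : d * t ≤ L.length := by
  have h1 : d * (m+6) ≤ ∑ e ∈ (cycleGraph (m+6)).edgeFinset,
      L.countP (fun p => decide (∃ x ∈ p.1, ∃ y ∈ p.2, e = s(x, y))) := by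
    calc d * (m+6) = ∑ _e ∈ (cycleGraph (m+6)).edgeFinset, d := by
          rw [Finset.sum_const, edge_card]; ring
      _ ≤ _ := by convert Finset.sum_le_sum fun e he => hL.2 e (SimpleGraph.mem_edgeFinset.mp he) <;> rfl
  rw [sum_countP] at h1
  have h2 : (L.map (fun p => ((cycleGraph (m+6)).edgeFinset.filter
      (fun e => decide (∃ x ∈ p.1, ∃ y ∈ p.2, e = s(x, y)) = true)).card)).sum
      ≤ L.length * 2 := by
    have := List.sum_le_card_nsmul (L.map (fun p => ((cycleGraph (m+6)).edgeFinset.filter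
      (fun e => decide (∃ x ∈ p.1, ∃ y ∈ p.2, e = s(x, y)) = true)).card)) 2 ?_
    · simpa using this
    · intro x hx
      obtain ⟨p, hp, rfl⟩ := List.mem_map.mp hx
      exact covered_le (hL.1 p hp) _
  have h3 : 2 * (d * t) ≤ 2 * L.length := by
    calc 2 * (d * t) = d * (m + 6) := by rw [ht]; ring
      _ ≤ L.length * 2 := le_trans h1 h2
      _ = 2 * L.length := by ring
  exact Nat.le_of_mul_le_mul_left h3 (by norm_num)

lemma star_biclique (k : ℕ) :
    (cycleGraph (m+6)).IsBiclique {((2*k : ℕ) : Fin (m+6))}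
      {((2*k : ℕ) : Fin (m+6)) - 1, ((2*k : ℕ) : Fin (m+6)) + 1} := by
  set c : Fin (m+6) := ((2*k : ℕ) : Fin (m+6))
  constructor
  · simp only [Finset.disjoint_left, Finset.mem_singleton, Finset.mem_insert]
    rintro a rfl h
    rcases h with h | h
    · exact one_ne_zero (α := Fin (m+6)) (by linear_combination h)
    · exact one_ne_zero (α := Fin (m+6)) (by linear_combination -h)
  · intro x hx y hy
    simp only [Finset.mem_singleton] at hx
    simp only [Finset.mem_insert, Finset.mem_singleton] at hy
    subst hx
    rcases hy with rfl | rfl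
    · exact cyc_adj.mpr (Or.inr rfl)
    · exact cyc_adj.mpr (Or.inl rfl)

lemma upper_bnd {d t : ℕ} (ht : m + 6 = t + t) :
    ∃ L, (cycleGraph (m+6)).IsBicliqueCover d L ∧ L.length = d * t := by
  set c : ℕ → Fin (m+6) := fun k => ((2*k : ℕ) : Fin (m+6)) with hc
  set L₀ := (List.range t).map (fun k => (({c k} : Finset (Fin (m+6))),
    ({c k - 1, c k + 1} : Finset (Fin (m+6))))) with hL₀
  refine ⟨(List.replicate d L₀).flatten, ⟨?_, ?_⟩, ?_⟩
  · intro p hp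
    obtain ⟨l, hl, hpl⟩ := List.mem_flatten.mp hp
    rw [List.eq_of_mem_replicate hl] at hpl
    obtain ⟨k, _, rfl⟩ := List.mem_map.mp hpl
    exact star_biclique k
  · intro e he
    obtain ⟨u, rfl⟩ := edge_form he
    rw [countP_join_replicate]
    have hpos : 0 < L₀.countP
        (fun p => decide (∃ x ∈ p.1, ∃ y ∈ p.2, s(u, u+1) = s(x, y))) := by
      rw [List.countP_pos_iff]
      by_cases hpar : u.val % 2 = 0
      · set k := u.val / 2 with hk
        have hkt : k < t := by have := u.isLt; omega
        have hcu : c k = u := by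
          show ((2 * (u.val / 2) : ℕ) : Fin (m+6)) = u
          rw [show 2 * (u.val / 2) = u.val by omega, Fin.cast_val_eq_self]
        refine ⟨_, List.mem_map.mpr ⟨k, List.mem_range.mpr hkt, rfl⟩, ?_⟩
        simp only [decide_eq_true_eq]
        exact ⟨c k, by simp, c k + 1, by simp, by rw [hcu]⟩
      · set w := u + 1 with hw
        have hwval : w.val = (u.val + 1) % (m+6) := by
          rw [hw, Fin.val_add, Fin.val_one]
        have hwe : w.val % 2 = 0 := by
          rcases Nat.lt_or_ge (u.val + 1) (m+6) with hlt | hge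
          · rw [Nat.mod_eq_of_lt hlt] at hwval; omega
          · have h6 : u.val + 1 = m + 6 := by have := u.isLt; omega
            rw [h6, Nat.mod_self] at hwval; omega
        set k := w.val / 2 with hk
        have hkt : k < t := by have := w.isLt; omega
        have hcw : c k = w := by
          show ((2 * (w.val / 2) : ℕ) : Fin (m+6)) = w
          rw [show 2 * (w.val / 2) = w.val by omega, Fin.cast_val_eq_self]
        refine ⟨_, List.mem_map.mpr ⟨k, List.mem_range.mpr hkt, rfl⟩, ?_⟩
        simp only [decide_eq_true_eq]
        refine ⟨c k, by simp, c k - 1, by simp, ?_⟩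
        rw [hcw, hw, add_sub_cancel_right]
        exact Sym2.eq_swap
    calc d = d * 1 := (Nat.mul_one d).symm
      _ ≤ _ := by convert Nat.mul_le_mul_left d hpos
  · rw [List.length_flatten]
    simp [hL₀]


end Aux

open SimpleGraph in
theorem stmt_3 (n d : ℕ) (hd : 0 < d) (hn : 6 ≤ n) (hev : Even n) :
    (SimpleGraph.cycleGraph n).bcd d = d * n / 2 := by
  obtain ⟨m, rfl⟩ : ∃ m, n = m + 6 := ⟨n - 6, by omega⟩
  obtain ⟨t, ht⟩ := hev
  have htt : m + 6 = t + t := ht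
  obtain ⟨L, hL, hlen⟩ := upper_bnd (d := d) htt
  have hq : d * (m + 6) / 2 = d * t := by
    rw [htt, show d * (t + t) = d * t * 2 by ring]
    exact Nat.mul_div_cancel _ (by norm_num)
  rw [SimpleGraph.bcd, hq]
  have hmem : d * t ∈ {k | ∃ L, (SimpleGraph.cycleGraph (m+6)).IsBicliqueCover d L ∧ L.length = k} :=
    ⟨L, hL, hlen⟩
  apply le_antisymm
  · exact Nat.sInf_le hmem
  · apply le_csInf ⟨_, hmem⟩
    rintro x ⟨L', hL', rfl⟩
    exact lower_bnd htt hL'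
end

section
/- For odd n ≥ 3 and even positive integer d, bc_d(C_n) = dn/2. -/
open Finset

open SimpleGraph
open Fin.CommRing



lemma two_cancel {N : ℕ} (hN : Odd N) {x y : Fin N} (h : x + x = y + y) : x = y := by
  obtain ⟨t, ht⟩ := hN
  have hv : (x.val + x.val) % N = (y.val + y.val) % N := by
    have := congrArg Fin.val h
    simpa [Fin.add_def] using this
  have hx := x.isLt; have hy := y.isLt
  have hmod : ∀ a : ℕ, a < 2 * N → a % N = if a < N then a else a - N := by
    intro a ha
    split
    · exact Nat.mod_eq_of_lt ‹_›
    · rw [Nat.mod_eq_sub_mod (le_of_not_gt ‹_›), Nat.mod_eq_of_lt (by omega)]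
  rw [hmod _ (by omega), hmod _ (by omega)] at hv
  exact Fin.ext (by split at hv <;> split at hv <;> omega)

lemma adj_cases {m : ℕ} {u v : Fin (m + 2)} (h : (cycleGraph (m + 2)).Adj u v) :
    v = u + 1 ∨ v = u - 1 := by
  rcases cycleGraph_adj.mp h with h' | h'
  · right; linear_combination -h'
  · left; linear_combination h'

lemma nbr_sum {m : ℕ} {u v w : Fin (m + 2)} (huv : (cycleGraph (m + 2)).Adj u v)
    (huw : (cycleGraph (m + 2)).Adj u w) (hvw : v ≠ w) : v + w = u + u := by
  rcases adj_cases huv with rfl | rfl <;> rcases adj_cases huw with rfl | rfl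
  · exact absurd rfl hvw
  · ring
  · ring
  · exact absurd rfl hvw

lemma biclique_card {m : ℕ} (hodd : Odd (m + 2)) {X Y : Finset (Fin (m + 2))}
    (h : (cycleGraph (m + 2)).IsBiclique X Y) : X.card * Y.card ≤ 2 := by
  obtain ⟨hdis, hadj⟩ := h
  rcases X.eq_empty_or_nonempty with rfl | ⟨x, hx⟩
  · simp
  rcases Y.eq_empty_or_nonempty with rfl | ⟨y, hy⟩
  · simp
  have hX2 : X.card ≤ 2 := by
    have hsub : X ⊆ {y + 1, y - 1} := by
      intro a ha
      rcases adj_cases ((hadj a ha y hy).symm) with rfl | rfl <;> simp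
    exact (card_le_card hsub).trans ((card_insert_le _ _).trans (by simp))
  have hY2 : Y.card ≤ 2 := by
    have hsub : Y ⊆ {x + 1, x - 1} := by
      intro a ha
      rcases adj_cases (hadj x hx a ha) with rfl | rfl <;> simp
    exact (card_le_card hsub).trans ((card_insert_le _ _).trans (by simp))
  by_contra hcon
  have hx2 : X.card = 2 := by
    by_contra h'
    have h1 : X.card ≤ 1 := by omega
    have := Nat.mul_le_mul h1 hY2
    omega
  have hy2 : Y.card = 2 := by
    by_contra h'
    have h1 : Y.card ≤ 1 := by omega
    have := Nat.mul_le_mul hX2 h1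
    omega
  obtain ⟨x₁, x₂, hx12, rfl⟩ := Finset.card_eq_two.mp hx2
  obtain ⟨y₁, y₂, hy12, rfl⟩ := Finset.card_eq_two.mp hy2
  have a11 := hadj x₁ (by simp) y₁ (by simp)
  have a12 := hadj x₁ (by simp) y₂ (by simp)
  have a21 := hadj x₂ (by simp) y₁ (by simp)
  have a22 := hadj x₂ (by simp) y₂ (by simp)
  have e1 : y₁ + y₂ = x₁ + x₁ := nbr_sum a11 a12 hy12
  have e2 : y₁ + y₂ = x₂ + x₂ := nbr_sum a21 a22 hy12
  exact hx12 (two_cancel hodd (e1.symm.trans e2))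

lemma fin_two_ne_zero {m : ℕ} (hm : 1 ≤ m) : (2 : Fin (m + 2)) ≠ 0 := by
  intro h
  have h2 : (2 : Fin (m + 2)) = 1 + 1 := by norm_num
  have := congrArg Fin.val (h2.symm.trans h)
  simp [Fin.add_def, Fin.val_one, Nat.mod_eq_of_lt (by omega : 1 + 1 < m + 2)] at this

lemma cover_card {m : ℕ} (hodd : Odd (m + 2)) (hm : 1 ≤ m) {X Y : Finset (Fin (m + 2))}
    (h : (cycleGraph (m + 2)).IsBiclique X Y) :
    (univ.filter (fun i : Fin (m + 2) =>
      ∃ x ∈ X, ∃ y ∈ Y, s(i, i + 1) = s(x, y))).card ≤ 2 := by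
  classical
  have hinj : ∀ i ∈ univ.filter (fun i : Fin (m + 2) =>
      ∃ x ∈ X, ∃ y ∈ Y, s(i, i + 1) = s(x, y)),
      (if i ∈ X then ((i, i + 1) : Fin (m+2) × Fin (m+2)) else (i + 1, i)) ∈ X ×ˢ Y := by
    intro i hi
    simp only [mem_filter] at hi
    obtain ⟨-, x, hx, y, hy, hxy⟩ := hi
    rw [Sym2.eq_iff] at hxy
    rcases hxy with ⟨rfl, rfl⟩ | ⟨rfl, rfl⟩
    · rw [if_pos hx]; exact mem_product.mpr ⟨hx, hy⟩
    · rw [if_neg (Finset.disjoint_right.mp h.1 hy)]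
      exact mem_product.mpr ⟨hx, hy⟩
  refine le_trans (Finset.card_le_card_of_injOn _ hinj ?_) ?_
  · intro i hi j hj hij
    by_cases hiX : i ∈ X <;> by_cases hjX : j ∈ X <;>
      simp only [hiX, hjX, if_true, if_false, Prod.mk.injEq, if_pos, if_neg, not_false_iff] at hij
    · exact hij.1
    · exact absurd (by linear_combination hij.2 - hij.1 : (2 : Fin (m+2)) = 0) (fin_two_ne_zero hm)
    · exact absurd (by linear_combination hij.1 - hij.2 : (2 : Fin (m+2)) = 0) (fin_two_ne_zero hm)
    · exact add_right_cancel hij.1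
  · rw [Finset.card_product]
    exact biclique_card hodd h

lemma sum_countP_le {m : ℕ} (hodd : Odd (m + 2)) (hm : 1 ≤ m)
    (L : List (Finset (Fin (m + 2)) × Finset (Fin (m + 2))))
    (hL : ∀ p ∈ L, (cycleGraph (m + 2)).IsBiclique p.1 p.2) :
    ∑ i : Fin (m + 2),
      L.countP (fun p => decide (∃ x ∈ p.1, ∃ y ∈ p.2, s(i, i + 1) = s(x, y))) ≤
      2 * L.length := by
  classical
  induction L with
  | nil => simp
  | cons p L ih =>
    simp only [List.countP_cons, List.length_cons, Finset.sum_add_distrib]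
    have h1 := ih (fun q hq => hL q (List.mem_cons_of_mem _ hq))
    have h2 : (∑ i : Fin (m + 2),
        if (decide (∃ x ∈ p.1, ∃ y ∈ p.2, s(i, i + 1) = s(x, y)) = true) then 1 else 0) ≤ 2 := by
      rw [← Finset.card_filter]
      refine le_trans (le_of_eq ?_) (cover_card hodd hm (hL p (List.mem_cons_self)))
      congr 1
      ext i
      simp
    omega

lemma two_le_countP {α : Type*} [DecidableEq α] {l : List α} {q : α → Bool} {a b : α}
    (hl : l.Nodup) (ha : a ∈ l) (hb : b ∈ l) (hab : a ≠ b)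
    (hqa : q a = true) (hqb : q b = true) : 2 ≤ l.countP q := by
  rw [List.countP_eq_length_filter]
  calc 2 = ({a, b} : Finset α).card := (Finset.card_pair hab).symm
    _ ≤ (l.filter q).toFinset.card := by
        apply Finset.card_le_card
        intro x hx
        simp only [Finset.mem_insert, Finset.mem_singleton] at hx
        rcases hx with rfl | rfl <;> simp [List.mem_filter, ha, hb, hqa, hqb]
    _ ≤ (l.filter q).length := (l.filter q).toFinset_card_le

lemma fin_one_ne_zero {m : ℕ} : (1 : Fin (m + 2)) ≠ 0 := by
  intro h
  simpa using congrArg Fin.val h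

lemma count_L0 {m : ℕ} (w : Fin (m + 2)) :
    2 ≤ ((List.finRange (m + 2)).map
        (fun j : Fin (m + 2) => (({j + 1} : Finset (Fin (m + 2))), ({j, j + 2} : Finset (Fin (m + 2)))))).countP
      (fun p => decide (∃ x ∈ p.1, ∃ y ∈ p.2, s(w, w + 1) = s(x, y))) := by
  rw [List.countP_map]
  apply two_le_countP (a := w) (b := w - 1) (List.nodup_finRange _)
      (List.mem_finRange _) (List.mem_finRange _)
  · intro h
    exact fin_one_ne_zero (m := m) (by linear_combination h)
  · simp only [Function.comp_apply, decide_eq_true_eq]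
    exact ⟨w + 1, by simp, w, by simp, Sym2.eq_swap⟩
  · simp only [Function.comp_apply, decide_eq_true_eq]
    refine ⟨w - 1 + 1, by simp, w - 1 + 2, by simp, ?_⟩
    have h1 : w - 1 + 1 = w := by ring
    have h2 : w - 1 + 2 = w + 1 := by ring
    rw [h1, h2]

theorem stmt_5 (n d : ℕ) (hn : 3 ≤ n) (hodd : Odd n) (hd : 0 < d) (hdev : Even d) :
    (SimpleGraph.cycleGraph n).bcd d = d * n / 2 := by

  classical
  obtain ⟨m, rfl⟩ : ∃ m, n = m + 2 := ⟨n - 2, by omega⟩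
  have hm : 1 ≤ m := by omega
  obtain ⟨k, hk⟩ := hdev
  have hk' : d = 2 * k := by omega
  set N := m + 2 with hN
  -- the explicit cover
  set L₀ : List (Finset (Fin N) × Finset (Fin N)) :=
    (List.finRange N).map
      (fun j : Fin N => (({j + 1} : Finset (Fin N)), ({j, j + 2} : Finset (Fin N)))) with hL₀
  set L : List (Finset (Fin N) × Finset (Fin N)) := (List.replicate k L₀).flatten with hL
  have hlen : L.length = k * N := by
    simp [hL, hL₀, List.length_flatten, Function.comp]
  have hbic : ∀ p ∈ L, (cycleGraph N).IsBiclique p.1 p.2 := by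
    intro p hp
    rw [hL] at hp
    rw [List.mem_flatten] at hp
    obtain ⟨l, hl, hpl⟩ := hp
    rw [List.mem_replicate] at hl
    rw [hl.2, hL₀, List.mem_map] at hpl
    obtain ⟨j, -, rfl⟩ := hpl
    constructor
    · simp only [Finset.disjoint_left, Finset.mem_singleton, Finset.mem_insert]
      rintro a rfl
      push_neg
      constructor
      · intro h; exact fin_one_ne_zero (m := m) (by linear_combination h)
      · intro h; exact fin_one_ne_zero (m := m) (by linear_combination -h)
    · rintro x hx y hy
      simp only [Finset.mem_singleton] at hx
      simp only [Finset.mem_insert, Finset.mem_singleton] at hy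
      subst hx
      rcases hy with rfl | rfl
      · exact cycleGraph_adj.mpr (Or.inl (add_sub_cancel_left _ _))
      · exact cycleGraph_adj.mpr (Or.inr (by ring))
  have hcover : (cycleGraph N).IsBicliqueCover d L := by
    refine ⟨hbic, ?_⟩
    intro e he
    induction e using Sym2.ind with
    | _ u v =>
      rw [SimpleGraph.mem_edgeSet] at he
      have key : ∀ w : Fin N, d ≤ L.countP
          (fun p => decide (∃ x ∈ p.1, ∃ y ∈ p.2, s(w, w + 1) = s(x, y))) := by
        intro w
        rw [hL, List.countP_flatten, List.map_replicate, List.sum_replicate, smul_eq_mul]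
        calc d = k * 2 := by omega
          _ ≤ k * L₀.countP _ := Nat.mul_le_mul_left k (count_L0 w)
      rcases adj_cases he with rfl | rfl
      · convert key u
      · have h1 : u - 1 + 1 = u := by ring
        have h2 : s(u, u - 1) = s(u - 1, u - 1 + 1) := by rw [h1, Sym2.eq_swap]
        rw [h2]
        convert key (u - 1)
  have hmem : k * N ∈ {t | ∃ L', (cycleGraph N).IsBicliqueCover d L' ∧ L'.length = t} :=
    ⟨L, hcover, hlen⟩
  have hdiv : d * N / 2 = k * N := by
    rw [hk']
    have : 2 * k * N = 2 * (k * N) := by ring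
    rw [this, Nat.mul_div_cancel_left _ (by norm_num)]
  rw [SimpleGraph.bcd, hdiv]
  apply le_antisymm
  · exact Nat.sInf_le hmem
  · apply le_csInf ⟨_, hmem⟩
    rintro t ⟨L', ⟨hbic', hcov'⟩, rfl⟩
    have hsum : d * N ≤ 2 * L'.length := by
      calc d * N = ∑ _i : Fin N, d := by simp [mul_comm]
        _ ≤ ∑ i : Fin N, L'.countP
            (fun p => decide (∃ x ∈ p.1, ∃ y ∈ p.2, s(i, i + 1) = s(x, y))) := by
            apply Finset.sum_le_sum
            intro i _
            show d ≤ _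
            convert hcov' s(i, i + 1) ((SimpleGraph.mem_edgeSet _).mpr
              (cycleGraph_adj.mpr (Or.inr (add_sub_cancel_left _ _))))
        _ ≤ 2 * L'.length := sum_countP_le hodd hm L' hbic'
    rw [hk'] at hsum
    have h2 : 2 * k * N = 2 * (k * N) := by ring
    omega
end

section
/- For odd n ≥ 3 and odd positive integer d, bc_d(C_n) = ((d-1)/2)·n + ⌊n/2⌋ + 1. -/
open Finset

namespace Stmt6Aux

open scoped Fin.CommRing Fin.NatCast

variable {m : ℕ}

lemma one_ne : (1 : Fin (m+3)) ≠ 0 := by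
  simp [Fin.ext_iff, Fin.val_one', Nat.mod_eq_of_lt]

lemma two_ne : (2 : Fin (m+3)) ≠ 0 := by
  have h : (2 : Fin (m+3)) = 1 + 1 := by norm_num
  have hv : ((2 : Fin (m+3)) : ℕ) = 2 := by
    rw [h, Fin.val_add, Fin.val_one', Nat.mod_eq_of_lt (show 1 < m+3 by omega),
      Nat.mod_eq_of_lt (show 1+1 < m+3 by omega)]
  intro h0
  rw [h0] at hv
  simp at hv

lemma twotwo_ne (hm : Even m) : (2 : Fin (m+3)) + 2 ≠ 0 := by
  intro h
  have h2 : (2 : Fin (m+3)) = 1 + 1 := by norm_num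
  have hv2 : ((2 : Fin (m+3)) : ℕ) = 2 := by
    rw [h2, Fin.val_add, Fin.val_one', Nat.mod_eq_of_lt (show 1 < m+3 by omega),
      Nat.mod_eq_of_lt (show 1+1 < m+3 by omega)]
  have hv : ((2 : Fin (m+3)) + 2 : Fin (m+3)).val = 0 := by rw [h]; rfl
  rw [Fin.val_add, hv2] at hv
  have hdvd : (m+3) ∣ 4 := Nat.dvd_of_mod_eq_zero hv
  obtain ⟨c, rfl⟩ := hm
  have h4 := Nat.le_of_dvd (by norm_num) hdvd
  have hc : c = 0 := by omega
  subst hc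
  omega

lemma adj_iff {u v : Fin (m+3)} :
    (SimpleGraph.cycleGraph (m+3)).Adj u v ↔ u = v + 1 ∨ v = u + 1 := by
  rw [SimpleGraph.cycleGraph_adj']
  have h1 : ∀ a b : Fin (m+3), ((a - b : Fin (m+3)) : ℕ) = 1 ↔ a = b + 1 := by
    intro a b
    rw [show (1:ℕ) = ((1 : Fin (m+3)) : ℕ) by rw [Fin.val_one', Nat.mod_eq_of_lt (by omega)],
      ← Fin.ext_iff, sub_eq_iff_eq_add']
  rw [h1, h1]

lemma edge_form {e : Sym2 (Fin (m+3))} (he : e ∈ (SimpleGraph.cycleGraph (m+3)).edgeSet) :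
    ∃ i : Fin (m+3), e = s(i, i+1) := by
  induction e using Sym2.ind with
  | _ u v =>
    rw [SimpleGraph.mem_edgeSet, adj_iff] at he
    rcases he with h | h
    · exact ⟨v, by rw [h, Sym2.eq_swap]⟩
    · exact ⟨u, by rw [h]⟩

def cherry (j : Fin (m+3)) : Finset (Fin (m+3)) × Finset (Fin (m+3)) := ({j}, {j-1, j+1})

lemma cherry_biclique (j : Fin (m+3)) :
    (SimpleGraph.cycleGraph (m+3)).IsBiclique (cherry j).1 (cherry j).2 := by
  constructor
  · simp only [cherry, Finset.disjoint_left, Finset.mem_singleton, Finset.mem_insert]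
    rintro a rfl h
    rcases h with h | h
    · exact one_ne (m := m) (by linear_combination h)
    · exact one_ne (m := m) (by linear_combination -h)
  · intro x hx y hy
    simp only [cherry, Finset.mem_singleton, Finset.mem_insert] at hx hy
    subst hx
    rw [adj_iff]
    rcases hy with rfl | rfl
    · left; ring
    · right; rfl

lemma cov_cherry (i j : Fin (m+3)) :
    (∃ x ∈ (cherry j).1, ∃ y ∈ (cherry j).2, s(i, i+1) = s(x, y)) ↔ (j = i ∨ j = i + 1) := by
  constructor
  · rintro ⟨x, hx, y, hy, hxy⟩
    simp only [cherry, Finset.mem_singleton, Finset.mem_insert] at hx hy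
    subst hx
    rw [Sym2.eq_iff] at hxy
    rcases hy with rfl | rfl
    · rcases hxy with ⟨h1, h2⟩ | ⟨h1, h2⟩
      · exact absurd (show (2 : Fin (m+3)) = 0 by linear_combination h2 - h1) two_ne
      · right; exact h2.symm
    · rcases hxy with ⟨h1, h2⟩ | ⟨h1, h2⟩
      · left; exact h1.symm
      · exact absurd (show (2 : Fin (m+3)) = 0 by linear_combination h2 - h1) two_ne
  · rintro (rfl | rfl)
    · exact ⟨j, by simp [cherry], j + 1, by simp [cherry], rfl⟩
    · refine ⟨i + 1, by simp [cherry], i, ?_, Sym2.eq_swap⟩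
      simp only [cherry, Finset.mem_insert, Finset.mem_singleton]
      left
      exact (add_sub_cancel_right i 1).symm

lemma countP_or {α : Type*} [DecidableEq α] (l : List α) (a b : α) (hab : a ≠ b)
    (p : α → Bool) (hp : ∀ j, p j = true ↔ (j = a ∨ j = b)) :
    l.countP p = l.count a + l.count b := by
  induction l with
  | nil => simp
  | cons x l ih =>
    rw [List.countP_cons, List.count_cons, List.count_cons, ih]
    by_cases hxa : x = a <;> by_cases hxb : x = b <;>
      simp [hp, hxa, hxb, hab, Ne.symm hab] <;> omega

lemma count_fr (a : Fin (m+3)) : (List.finRange (m+3)).count a = 1 :=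
  le_antisymm (List.nodup_iff_count_le_one.mp (List.nodup_finRange _) a)
    (List.count_pos_iff.mpr (List.mem_finRange a))

def allC (m : ℕ) : List (Finset (Fin (m+3)) × Finset (Fin (m+3))) :=
  (List.finRange (m+3)).map cherry

lemma self_ne_succ (i : Fin (m+3)) : i ≠ i + 1 := by
  intro h
  exact one_ne (m := m) (by linear_combination -h)

lemma countP_allC (i : Fin (m+3)) :
    (allC m).countP (fun p => decide (∃ x ∈ p.1, ∃ y ∈ p.2, s(i, i+1) = s(x, y))) = 2 := by
  rw [allC, List.countP_map,
    countP_or (List.finRange (m+3)) i (i+1) (self_ne_succ i) _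
      (fun j => by
        simp only [Function.comp_apply, decide_eq_true_eq]
        exact cov_cherry i j),
    count_fr, count_fr]

def oddCh (m : ℕ) : List (Finset (Fin (m+3)) × Finset (Fin (m+3))) :=
  (List.range ((m+2)/2)).map (fun k => cherry ((2*k+1 : ℕ) : Fin (m+3)))

def lastP (m : ℕ) : Finset (Fin (m+3)) × Finset (Fin (m+3)) :=
  ({(0 : Fin (m+3))}, {((m+2 : ℕ) : Fin (m+3))})

lemma cast_m2_succ : ((m+2 : ℕ) : Fin (m+3)) + 1 = 0 := by
  rw [show ((m+2 : ℕ) : Fin (m+3)) + 1 = ((m+2+1 : ℕ) : Fin (m+3)) by push_cast; ring]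
  exact Fin.natCast_self (m+3)

lemma lastP_biclique :
    (SimpleGraph.cycleGraph (m+3)).IsBiclique (lastP m).1 (lastP m).2 := by
  constructor
  · simp only [lastP, Finset.disjoint_left, Finset.mem_singleton]
    rintro a rfl h
    have : ((0 : Fin (m+3)) : ℕ) = ((m+2 : ℕ) : Fin (m+3)).val := by rw [h]
    rw [Fin.val_cast_of_lt (show m+2 < m+3 by omega), Fin.val_zero] at this
    omega
  · intro x hx y hy
    simp only [lastP, Finset.mem_singleton] at hx hy
    subst hx; subst hy
    rw [adj_iff]
    left
    rw [cast_m2_succ]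

lemma countP_flatten_replicate {α : Type*} (p : α → Bool) (l : List α) (a : ℕ) :
    ((List.replicate a l).flatten).countP p = a * l.countP p := by
  induction a with
  | zero => simp
  | succ k ih =>
    rw [List.replicate_succ, List.flatten_cons, List.countP_append, ih]
    ring


lemma val_succ (i : Fin (m+3)) (h : i.val < m+2) : ((i+1 : Fin (m+3)) : ℕ) = i.val + 1 := by
  rw [Fin.val_add, Fin.val_one', Nat.mod_eq_of_lt (show 1 < m+3 by omega),
    Nat.mod_eq_of_lt (by omega)]

lemma tail_cover (hm : Even m) (i : Fin (m+3)) :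
    1 ≤ (oddCh m ++ [lastP m]).countP
      (fun p => decide (∃ x ∈ p.1, ∃ y ∈ p.2, s(i, i+1) = s(x, y))) := by
  obtain ⟨c, rfl⟩ := hm
  have key : ∃ p ∈ oddCh (c+c) ++ [lastP (c+c)],
      (fun p => decide (∃ x ∈ p.1, ∃ y ∈ p.2, s(i, i+1) = s(x, y))) p = true := by
    by_cases hi : i.val = c + c + 2
    · refine ⟨lastP (c+c), List.mem_append_right _ (List.mem_singleton_self _), ?_⟩
      simp only [lastP, decide_eq_true_eq, Finset.mem_singleton, exists_eq_left]
      have h1 : i = ((c+c+2 : ℕ) : Fin (c+c+3)) := by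
        rw [Fin.ext_iff, Fin.val_cast_of_lt (show c+c+2 < c+c+3 by omega), hi]
      have h2 : i + 1 = 0 := by rw [h1]; exact cast_m2_succ (m := c+c)
      rw [h2, h1, Sym2.eq_swap]
    · have hile : i.val < c + c + 2 := by have := i.isLt; omega
      by_cases hpar : i.val % 2 = 1
      · refine ⟨cherry ((2*(i.val/2)+1 : ℕ) : Fin (c+c+3)),
          List.mem_append_left _ ?_, ?_⟩
        · exact List.mem_map.mpr ⟨i.val/2, List.mem_range.mpr (by omega), rfl⟩
        · rw [decide_eq_true_eq, cov_cherry]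
          left
          rw [Fin.ext_iff, Fin.val_cast_of_lt (by omega)]
          omega
      · refine ⟨cherry ((2*(i.val/2)+1 : ℕ) : Fin (c+c+3)),
          List.mem_append_left _ ?_, ?_⟩
        · exact List.mem_map.mpr ⟨i.val/2, List.mem_range.mpr (by omega), rfl⟩
        · rw [decide_eq_true_eq, cov_cherry]
          right
          rw [Fin.ext_iff, Fin.val_cast_of_lt (by omega), val_succ i (by omega)]
          omega
  have := List.countP_pos_iff.mpr key
  omega

lemma upper_cover (hm : Even m) (a : ℕ) :
    ∃ L, (SimpleGraph.cycleGraph (m+3)).IsBicliqueCover (2*a+1) L ∧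
      L.length = a * (m+3) + (m+2)/2 + 1 := by
  refine ⟨(List.replicate a (allC m)).flatten ++ (oddCh m ++ [lastP m]), ⟨?_, ?_⟩, ?_⟩
  · intro p hp
    rw [List.mem_append] at hp
    rcases hp with hp | hp
    · rw [List.mem_flatten] at hp
      obtain ⟨l, hl, hpl⟩ := hp
      rw [List.mem_replicate] at hl
      rw [hl.2, allC, List.mem_map] at hpl
      obtain ⟨j, _, rfl⟩ := hpl
      exact cherry_biclique j
    · rw [List.mem_append] at hp
      rcases hp with hp | hp
      · rw [oddCh, List.mem_map] at hp
        obtain ⟨k, _, rfl⟩ := hp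
        exact cherry_biclique _
      · rw [List.mem_singleton] at hp
        rw [hp]
        exact lastP_biclique
  · intro e he
    obtain ⟨i, rfl⟩ := edge_form he
    rw [List.countP_append, countP_flatten_replicate]
    have h : 2*a+1 ≤ a * (allC m).countP
        (fun p => decide (∃ x ∈ p.1, ∃ y ∈ p.2, s(i, i+1) = s(x, y))) +
        (oddCh m ++ [lastP m]).countP
        (fun p => decide (∃ x ∈ p.1, ∃ y ∈ p.2, s(i, i+1) = s(x, y))) := by
      rw [countP_allC]
      have := tail_cover hm i
      omega
    convert h
  · simp only [List.length_append, List.length_flatten, List.map_replicate,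
      List.sum_replicate, smul_eq_mul, allC, oddCh, List.length_map,
      List.length_finRange, List.length_range, List.length_singleton]
    ring

lemma filter_card_le (hm : Even m) {X Y : Finset (Fin (m+3))}
    (hb : (SimpleGraph.cycleGraph (m+3)).IsBiclique X Y) :
    (Finset.univ.filter
      (fun i : Fin (m+3) => decide (∃ x ∈ X, ∃ y ∈ Y, s(i, i+1) = s(x, y)) = true)).card ≤ 2 := by
  obtain ⟨hdisj, hadj⟩ := hb
  classical
  have hmaps : ∀ i ∈ Finset.univ.filter
      (fun i : Fin (m+3) => decide (∃ x ∈ X, ∃ y ∈ Y, s(i, i+1) = s(x, y)) = true),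
      (if i ∈ X then ((i, i+1) : Fin (m+3) × Fin (m+3)) else (i+1, i)) ∈ X ×ˢ Y := by
    intro i hi
    rw [Finset.mem_filter, decide_eq_true_eq] at hi
    obtain ⟨-, x, hx, y, hy, hxy⟩ := hi
    rw [Sym2.eq_iff] at hxy
    rcases hxy with ⟨h1, h2⟩ | ⟨h1, h2⟩
    · subst h1; subst h2
      rw [if_pos hx]
      exact Finset.mem_product.mpr ⟨hx, hy⟩
    · subst h1; subst h2
      rw [if_neg (fun hiX => Finset.disjoint_left.mp hdisj hiX hy)]
      exact Finset.mem_product.mpr ⟨hx, hy⟩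
  have hinj : Set.InjOn (fun i : Fin (m+3) =>
      (if i ∈ X then ((i, i+1) : Fin (m+3) × Fin (m+3)) else (i+1, i)))
      (Finset.univ.filter
        (fun i : Fin (m+3) => decide (∃ x ∈ X, ∃ y ∈ Y, s(i, i+1) = s(x, y)) = true)) := by
    intro i _ j _ hij
    by_cases hiX : i ∈ X <;> by_cases hjX : j ∈ X <;>
      simp only [hiX, hjX, if_pos, if_neg, if_true, if_false, Prod.mk.injEq] at hij
    · exact hij.1
    · exact absurd (show (2 : Fin (m+3)) = 0 by linear_combination hij.2 - hij.1) two_ne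
    · exact absurd (show (2 : Fin (m+3)) = 0 by linear_combination hij.1 - hij.2) two_ne
    · exact add_right_cancel hij.1
  have hcard := Finset.card_le_card_of_injOn _ hmaps hinj
  refine hcard.trans ?_
  rw [Finset.card_product]
  -- now show X.card * Y.card ≤ 2
  rcases Finset.eq_empty_or_nonempty X with rfl | ⟨x0, hx0⟩
  · simp
  rcases Finset.eq_empty_or_nonempty Y with rfl | ⟨y0, hy0⟩
  · simp
  have hYsub : ∀ x ∈ X, Y ⊆ {x - 1, x + 1} := by
    intro x hx y hy
    have h := hadj x hx y hy
    rw [adj_iff] at h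
    rw [Finset.mem_insert, Finset.mem_singleton]
    rcases h with h | h
    · left; linear_combination -h
    · right; exact h
  have hXsub : X ⊆ {y0 - 1, y0 + 1} := by
    intro x hx
    have h := hadj x hx y0 hy0
    rw [adj_iff] at h
    rw [Finset.mem_insert, Finset.mem_singleton]
    rcases h with h | h
    · right; exact h
    · left; linear_combination -h
  have hY2 : Y.card ≤ 2 := (Finset.card_le_card (hYsub x0 hx0)).trans
    ((Finset.card_insert_le _ _).trans (by simp))
  have hX2 : X.card ≤ 2 := (Finset.card_le_card hXsub).trans
    ((Finset.card_insert_le _ _).trans (by simp))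
  by_cases hboth : X.card = 2 ∧ Y.card = 2
  · exfalso
    obtain ⟨x1, x2, hne, hXeq⟩ := Finset.card_eq_two.mp hboth.1
    have hx1 : x1 ∈ X := by rw [hXeq]; simp
    have hx2 : x2 ∈ X := by rw [hXeq]; simp
    have e1 : Y = {x1 - 1, x1 + 1} := Finset.eq_of_subset_of_card_le (hYsub x1 hx1)
      (((Finset.card_insert_le _ _).trans (by simp)).trans (le_of_eq hboth.2.symm))
    have e2 : Y = {x2 - 1, x2 + 1} := Finset.eq_of_subset_of_card_le (hYsub x2 hx2)
      (((Finset.card_insert_le _ _).trans (by simp)).trans (le_of_eq hboth.2.symm))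
    have h11 : x1 - 1 ∈ ({x2 - 1, x2 + 1} : Finset (Fin (m+3))) := by
      rw [← e2, e1]; simp
    have h12 : x1 + 1 ∈ ({x2 - 1, x2 + 1} : Finset (Fin (m+3))) := by
      rw [← e2, e1]; simp
    rw [Finset.mem_insert, Finset.mem_singleton] at h11 h12
    rcases h11 with h11 | h11
    · exact hne (by linear_combination h11)
    · rcases h12 with h12 | h12
      · exact twotwo_ne hm (by linear_combination h12 - h11)
      · exact hne (by linear_combination h12)
  · rcases Nat.lt_or_ge X.card 2 with hX1 | hX1
    · calc X.card * Y.card ≤ 1 * 2 := Nat.mul_le_mul (by omega) hY2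
        _ = 2 := by norm_num
    · have hXc : X.card = 2 := le_antisymm hX2 hX1
      have hYc : Y.card ≤ 1 := by
        rcases Nat.lt_or_ge Y.card 2 with h | h
        · omega
        · exact absurd ⟨hXc, le_antisymm hY2 h⟩ hboth
      calc X.card * Y.card ≤ 2 * 1 := Nat.mul_le_mul hX2 hYc
        _ = 2 := by norm_num

lemma sum_countP_le (hm : Even m) (L : List (Finset (Fin (m+3)) × Finset (Fin (m+3))))
    (hL : ∀ p ∈ L, (SimpleGraph.cycleGraph (m+3)).IsBiclique p.1 p.2) :
    (∑ i : Fin (m+3),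
      L.countP (fun p => decide (∃ x ∈ p.1, ∃ y ∈ p.2, s(i, i+1) = s(x, y)))) ≤
      2 * L.length := by
  induction L with
  | nil => simp
  | cons q L ih =>
    simp only [List.countP_cons, List.length_cons, Finset.sum_add_distrib]
    have h1 := ih (fun p hp => hL p (List.mem_cons_of_mem _ hp))
    have h2 : (∑ i : Fin (m+3),
        if (decide (∃ x ∈ q.1, ∃ y ∈ q.2, s(i, i+1) = s(x, y)) = true) then 1 else 0) ≤ 2 := by
      rw [Finset.sum_boole]
      have := filter_card_le hm (hL q List.mem_cons_self)
      exact_mod_cast this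
    omega

lemma lower_len (hm : Even m) (a : ℕ) (L : List (Finset (Fin (m+3)) × Finset (Fin (m+3))))
    (hc : (SimpleGraph.cycleGraph (m+3)).IsBicliqueCover (2*a+1) L) :
    a * (m+3) + (m+2)/2 + 1 ≤ L.length := by
  have h1 : ∀ i : Fin (m+3), (2*a+1) ≤
      L.countP (fun p => decide (∃ x ∈ p.1, ∃ y ∈ p.2, s(i, i+1) = s(x, y))) := by
    intro i
    convert hc.2 s(i, i+1) (((SimpleGraph.cycleGraph (m+3)).mem_edgeSet).mpr (adj_iff.mpr (Or.inr rfl)))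
  have h2 : (2*a+1) * (m+3) ≤ ∑ i : Fin (m+3),
      L.countP (fun p => decide (∃ x ∈ p.1, ∃ y ∈ p.2, s(i, i+1) = s(x, y))) := by
    calc (2*a+1) * (m+3) = ∑ _i : Fin (m+3), (2*a+1) := by
          rw [Finset.sum_const, Finset.card_univ, Fintype.card_fin, smul_eq_mul, mul_comm]
      _ ≤ _ := Finset.sum_le_sum (fun i _ => h1 i)
  have h3 := sum_countP_le hm L hc.1
  have h4 : (2*a+1) * (m+3) = 2*(a*(m+3)) + (m+3) := by ring
  have h5 := (h4 ▸ h2).trans h3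
  obtain ⟨c, rfl⟩ := hm
  obtain ⟨t, ht⟩ : ∃ t, a * (c+c+3) = t := ⟨_, rfl⟩
  rw [ht] at h5 ⊢
  omega

end Stmt6Aux

theorem stmt_6 (n d : ℕ) (hn : 3 ≤ n) (hodd : Odd n) (hd : 0 < d) (hdodd : Odd d) :
    (SimpleGraph.cycleGraph n).bcd d = (d - 1) / 2 * n + n / 2 + 1 := by
  obtain ⟨m, rfl⟩ : ∃ m, n = m + 3 := ⟨n - 3, by omega⟩
  obtain ⟨a, rfl⟩ : ∃ a, d = 2*a + 1 := by
    rcases hdodd with ⟨a, ha⟩; exact ⟨a, by omega⟩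
  have hm : Even m := by
    rcases hodd with ⟨k, hk⟩; exact ⟨k - 1, by omega⟩
  obtain ⟨L, hLc, hLlen⟩ := Stmt6Aux.upper_cover hm a
  have hub : (SimpleGraph.cycleGraph (m+3)).bcd (2*a+1) ≤ a*(m+3) + (m+2)/2 + 1 :=
    Nat.sInf_le ⟨L, hLc, hLlen⟩
  have hlb : a*(m+3) + (m+2)/2 + 1 ≤ (SimpleGraph.cycleGraph (m+3)).bcd (2*a+1) := by
    refine le_csInf ⟨L.length, L, hLc, rfl⟩ ?_
    rintro b ⟨L', hc', rfl⟩
    exact Stmt6Aux.lower_len hm a L' hc'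
  have harith : (2*a+1-1)/2 * (m+3) + (m+3)/2 + 1 = a*(m+3) + (m+2)/2 + 1 := by
    have h1 : (2*a+1-1)/2 = a := by omega
    rw [h1]
    obtain ⟨c, rfl⟩ := hm
    congr 1
    omega
  rw [harith]
  exact le_antisymm hub hlb
end

section
/- For any two finite simple graphs G and H and any positive integer d, the d-biclique covering number of the lexicographic product G[H] satisfies bc_d(G[H]) ≤ bc_d(G) + bc_d(H)·χ(complement of G). -/
open Finset

/-- The lexicographic product `G[H]`. -/
def SimpleGraph.lexProd {α β : Type*} (G : SimpleGraph α) (H : SimpleGraph β) :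
    SimpleGraph (α × β) where
  Adj p q := G.Adj p.1 q.1 ∨ (p.1 = q.1 ∧ H.Adj p.2 q.2)
  symm := by
    constructor
    rintro p q (h | ⟨h1, h2⟩)
    · exact Or.inl h.symm
    · exact Or.inr ⟨h1.symm, h2.symm⟩
  loopless := by constructor; rintro p (h | ⟨-, h⟩) <;> simp at h

/- ## Auxiliary lemmas -/

lemma my_countP_le_flatMap {A B : Type*} (l : List A) (f : A → List B) (p : A → Bool)
    (q : B → Bool) (h : ∀ a ∈ l, p a = true → 1 ≤ (f a).countP q) :
    l.countP p ≤ (l.flatMap f).countP q := by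
  induction l with
  | nil => simp
  | cons a l ih =>
    rw [List.flatMap_cons, List.countP_append, List.countP_cons]
    have h2 := ih (fun a ha => h a (List.mem_cons_of_mem _ ha))
    by_cases hp : p a = true
    · rw [if_pos hp]
      have := h a List.mem_cons_self hp
      omega
    · rw [if_neg hp]
      omega

lemma exists_biclique_cover {V : Type*} [Fintype V] [DecidableEq V] (G : SimpleGraph V)
    [DecidableRel G.Adj] (d : ℕ) : ∃ L, G.IsBicliqueCover d L := by
  classical
  set c : List (Finset V × Finset V) :=
    ((Finset.univ ×ˢ Finset.univ : Finset (V × V)).toList.filterMap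
      (fun q => if G.Adj q.1 q.2 then some ({q.1}, {q.2}) else none)) with hc
  refine ⟨(List.replicate d c).flatten, ?_, ?_⟩
  · intro p hp
    rw [List.mem_flatten] at hp
    obtain ⟨l, hl, hpl⟩ := hp
    rw [List.eq_of_mem_replicate hl] at hpl
    rw [hc, List.mem_filterMap] at hpl
    obtain ⟨q, _, hq⟩ := hpl
    by_cases hadj : G.Adj q.1 q.2
    · rw [if_pos hadj, Option.some_inj] at hq
      subst hq
      refine ⟨by simpa using hadj.ne, ?_⟩
      intro x hx y hy
      simp only [Finset.mem_singleton] at hx hy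
      subst hx; subst hy; exact hadj
    · rw [if_neg hadj] at hq; exact absurd hq (by simp)
  · intro e he
    induction e with
    | h a b =>
      rw [SimpleGraph.mem_edgeSet] at he
      have h1 : 1 ≤ c.countP (fun p => decide (∃ x ∈ p.1, ∃ y ∈ p.2, s(a, b) = s(x, y))) := by
        rw [Nat.one_le_iff_ne_zero, ← Nat.pos_iff_ne_zero, List.countP_pos_iff]
        refine ⟨({a}, {b}), ?_, ?_⟩
        · rw [hc, List.mem_filterMap]
          exact ⟨(a, b), by simp, by simp [he]⟩
        · simp only [decide_eq_true_eq]
          exact ⟨a, Finset.mem_singleton_self a, b, Finset.mem_singleton_self b, rfl⟩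
      calc d = d * 1 := (mul_one d).symm
        _ ≤ d * c.countP _ := Nat.mul_le_mul_left d h1
        _ = _ := by
            rw [List.countP_flatten, List.map_replicate, List.sum_replicate, smul_eq_mul]

theorem stmt_7 {α β : Type*} [Fintype α] [Fintype β] [DecidableEq α] [DecidableEq β]
    (G : SimpleGraph α) (H : SimpleGraph β) (d : ℕ) (hd : 0 < d) :
    ((G.lexProd H).bcd d : ℕ∞) ≤ G.bcd d + H.bcd d * Gᶜ.chromaticNumber := by
  classical
  -- optimal covers of G and H
  obtain ⟨LG0, hLG0⟩ := exists_biclique_cover G d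
  obtain ⟨LH0, hLH0⟩ := exists_biclique_cover H d
  have hGmem : G.bcd d ∈ {n | ∃ L, G.IsBicliqueCover d L ∧ L.length = n} :=
    Nat.sInf_mem ⟨LG0.length, LG0, hLG0, rfl⟩
  have hHmem : H.bcd d ∈ {n | ∃ L, H.IsBicliqueCover d L ∧ L.length = n} :=
    Nat.sInf_mem ⟨LH0.length, LH0, hLH0, rfl⟩
  obtain ⟨LG, hLG, hLGlen⟩ := hGmem
  obtain ⟨LH, hLH, hLHlen⟩ := hHmem
  -- coloring of Gᶜ
  set t := (Gᶜ.chromaticNumber).toNat with ht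
  have hcolor : Gᶜ.Colorable t := Gᶜ.colorable_chromaticNumber_of_fintype
  have hχ : (t : ℕ∞) = Gᶜ.chromaticNumber := by
    rw [ht]
    exact ENat.coe_toNat
      (SimpleGraph.chromaticNumber_ne_top_iff_exists.mpr ⟨_, Gᶜ.colorable_of_fintype⟩)
  obtain ⟨C⟩ := hcolor
  set S : Fin t → Finset α := fun i => Finset.univ.filter (fun x => C x = i) with hS
  have hSkey : ∀ i, ∀ x ∈ S i, ∀ y ∈ S i, x ≠ y → G.Adj x y := by
    intro i x hx y hy hxy
    simp only [hS, Finset.mem_filter] at hx hy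
    by_contra hadj
    exact C.valid ((G.compl_adj x y).mpr ⟨hxy, hadj⟩) (hx.2.trans hy.2.symm)
  -- the combined cover
  set L1 : List (Finset (α × β) × Finset (α × β)) :=
    LG.map (fun p => (p.1 ×ˢ Finset.univ, p.2 ×ˢ Finset.univ)) with hL1
  set L2 : List (Finset (α × β) × Finset (α × β)) :=
    LH.flatMap (fun p => (List.finRange t).map (fun i => (S i ×ˢ p.1, S i ×ˢ p.2))) with hL2
  have hcover : (G.lexProd H).IsBicliqueCover d (L1 ++ L2) := by
    constructor
    · intro p hp
      rw [List.mem_append] at hp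
      rcases hp with hp | hp
      · rw [hL1, List.mem_map] at hp
        obtain ⟨q, hq, rfl⟩ := hp
        obtain ⟨hdisj, hadj⟩ := hLG.1 q hq
        constructor
        · rw [Finset.disjoint_left]
          rintro ⟨a, b⟩ h1 h2
          rw [Finset.mem_product] at h1 h2
          exact Finset.disjoint_left.mp hdisj h1.1 h2.1
        · rintro ⟨a, b⟩ h1 ⟨a', b'⟩ h2
          rw [Finset.mem_product] at h1 h2
          exact Or.inl (hadj a h1.1 a' h2.1)
      · rw [hL2, List.mem_flatMap] at hp
        obtain ⟨q, hq, hp⟩ := hp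
        rw [List.mem_map] at hp
        obtain ⟨i, _, rfl⟩ := hp
        obtain ⟨hdisj, hadj⟩ := hLH.1 q hq
        constructor
        · rw [Finset.disjoint_left]
          rintro ⟨a, b⟩ h1 h2
          rw [Finset.mem_product] at h1 h2
          exact Finset.disjoint_left.mp hdisj h1.2 h2.2
        · rintro ⟨a, b⟩ h1 ⟨a', b'⟩ h2
          rw [Finset.mem_product] at h1 h2
          by_cases hab : a = a'
          · exact Or.inr ⟨hab, hadj b h1.2 b' h2.2⟩
          · exact Or.inl (hSkey i a h1.1 a' h2.1 hab)
    · intro e he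
      induction e with
      | h u v =>
        obtain ⟨x₁, y₁⟩ := u
        obtain ⟨x₂, y₂⟩ := v
        rw [SimpleGraph.mem_edgeSet] at he
        rw [List.countP_append]
        rcases he with he | ⟨heq, he⟩ <;> dsimp only at *
        · -- G-adjacent first coordinates: use L1
          have key : LG.countP (fun p => decide (∃ x ∈ p.1, ∃ y ∈ p.2, s(x₁, x₂) = s(x, y))) ≤
              L1.countP (fun p => decide (∃ x ∈ p.1, ∃ y ∈ p.2,
                s((x₁, y₁), (x₂, y₂)) = s(x, y))) := by
            rw [hL1, List.countP_map]
            apply List.countP_mono_left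
            intro p _ hp
            simp only [Function.comp, decide_eq_true_eq] at hp ⊢
            obtain ⟨x, hx, y, hy, hxy⟩ := hp
            rw [Sym2.eq_iff] at hxy
            rcases hxy with ⟨rfl, rfl⟩ | ⟨rfl, rfl⟩
            · exact ⟨(x₁, y₁), Finset.mem_product.mpr ⟨hx, Finset.mem_univ _⟩,
                (x₂, y₂), Finset.mem_product.mpr ⟨hy, Finset.mem_univ _⟩, rfl⟩
            · exact ⟨(x₂, y₂), Finset.mem_product.mpr ⟨hx, Finset.mem_univ _⟩,
                (x₁, y₁), Finset.mem_product.mpr ⟨hy, Finset.mem_univ _⟩, Sym2.eq_swap⟩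
          have := hLG.2 s(x₁, x₂) (G.mem_edgeSet.mpr he)
          omega
        · -- same first coordinate: use L2
          subst heq
          have key : LH.countP (fun p => decide (∃ x ∈ p.1, ∃ y ∈ p.2, s(y₁, y₂) = s(x, y))) ≤
              L2.countP (fun p => decide (∃ x ∈ p.1, ∃ y ∈ p.2,
                s((x₁, y₁), (x₁, y₂)) = s(x, y))) := by
            rw [hL2]
            apply my_countP_le_flatMap
            intro p _ hp
            simp only [decide_eq_true_eq] at hp
            obtain ⟨x, hx, y, hy, hxy⟩ := hp
            rw [Nat.one_le_iff_ne_zero, ← Nat.pos_iff_ne_zero, List.countP_pos_iff]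
            have hxS : x₁ ∈ S (C x₁) := by simp [hS]
            refine ⟨(S (C x₁) ×ˢ p.1, S (C x₁) ×ˢ p.2),
              List.mem_map.mpr ⟨C x₁, List.mem_finRange _, rfl⟩, ?_⟩
            simp only [decide_eq_true_eq]
            rw [Sym2.eq_iff] at hxy
            rcases hxy with ⟨rfl, rfl⟩ | ⟨rfl, rfl⟩
            · exact ⟨(x₁, y₁), Finset.mem_product.mpr ⟨hxS, hx⟩,
                (x₁, y₂), Finset.mem_product.mpr ⟨hxS, hy⟩, rfl⟩
            · exact ⟨(x₁, y₂), Finset.mem_product.mpr ⟨hxS, hx⟩,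
                (x₁, y₁), Finset.mem_product.mpr ⟨hxS, hy⟩, Sym2.eq_swap⟩
          have := hLH.2 s(y₁, y₂) (H.mem_edgeSet.mpr he)
          omega
  -- length computation
  have haux : ∀ (l : List (Finset β × Finset β)),
      (l.flatMap fun p => (List.finRange t).map
        (fun i => (S i ×ˢ p.1, S i ×ˢ p.2))).length = l.length * t := by
    intro l
    induction l with
    | nil => simp
    | cons a l ih => simp [ih, Nat.succ_mul, Nat.add_comm]
  have hlen : (L1 ++ L2).length = G.bcd d + H.bcd d * t := by
    rw [List.length_append, hL1, List.length_map, hLGlen, hL2, haux, hLHlen]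
  -- conclude
  have hle : (G.lexProd H).bcd d ≤ G.bcd d + H.bcd d * t :=
    Nat.sInf_le ⟨L1 ++ L2, hcover, hlen⟩
  calc ((G.lexProd H).bcd d : ℕ∞) ≤ ((G.bcd d + H.bcd d * t : ℕ) : ℕ∞) := by
        exact_mod_cast hle
    _ = (G.bcd d : ℕ∞) + (H.bcd d : ℕ∞) * (t : ℕ∞) := by push_cast; ring
    _ = _ := by rw [hχ]
end

section
/- Let G_1, ..., G_k be finite simple graphs and d a positive integer. Then max_i bc_d(G_i) ≤ bc_d(G_1 ∨ G_2 ∨ ... ∨ G_k) ≤ max_i bc_d(G_i) + bc_d(K_k), where ∨ denotes the join of graphs. -/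
open Finset

/-- The join of a family of graphs: disjoint copies of the `G i` together with all
edges between distinct copies. -/
def joinFam {ι : Type*} {V : ι → Type*} (G : ∀ i, SimpleGraph (V i)) :
    SimpleGraph (Σ i, V i) where
  Adj p q := p.1 ≠ q.1 ∨ ∃ (i : ι) (x y : V i), (G i).Adj x y ∧ p = ⟨i, x⟩ ∧ q = ⟨i, y⟩
  symm := by
    constructor
    rintro p q (h | ⟨i, x, y, hxy, rfl, rfl⟩)
    · exact Or.inl h.symm
    · exact Or.inr ⟨i, y, x, hxy.symm, rfl, rfl⟩
  loopless := by
    constructor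
    rintro p (h | ⟨i, x, y, hxy, rfl, h2⟩)
    · exact h rfl
    · obtain ⟨-, h3⟩ := Sigma.mk.inj_iff.mp h2
      exact hxy.ne (eq_of_heq h3)


section Helpers
open SimpleGraph

lemma exists_bicliqueCover {W : Type*} [Fintype W] [DecidableEq W] (G : SimpleGraph W) (d : ℕ) :
    ∃ L, G.IsBicliqueCover d L := by
  classical
  refine ⟨(List.replicate d (((Finset.univ ×ˢ Finset.univ).filter
      fun p => G.Adj p.1 p.2).toList.map fun p => ({p.1}, {p.2}))).flatten, ?_, ?_⟩
  · intro p hp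
    simp only [List.mem_flatten, List.mem_replicate] at hp
    obtain ⟨l, ⟨-, rfl⟩, hp⟩ := hp
    simp only [List.mem_map, Finset.mem_toList, Finset.mem_filter] at hp
    obtain ⟨q, ⟨-, hadj⟩, rfl⟩ := hp
    refine ⟨by simp [hadj.ne], ?_⟩
    simp only [Finset.mem_singleton]
    rintro x rfl y rfl
    exact hadj
  · intro e he
    induction e with
    | _ x y =>
      rw [SimpleGraph.mem_edgeSet] at he
      rw [List.countP_flatten]
      simp only [List.map_replicate, List.sum_replicate, smul_eq_mul]
      refine Nat.le_mul_of_pos_right d ?_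
      rw [List.countP_pos_iff]
      refine ⟨({x}, {y}), ?_, ?_⟩
      · simp only [List.mem_map, Finset.mem_toList, Finset.mem_filter]
        exact ⟨(x, y), ⟨by simp, he⟩, rfl⟩
      · simp

lemma bcd_spec {W : Type*} [Fintype W] [DecidableEq W] (G : SimpleGraph W) (d : ℕ) :
    ∃ L, G.IsBicliqueCover d L ∧ L.length = G.bcd d := by
  obtain ⟨L, h⟩ := exists_bicliqueCover G d
  have hne : {n | ∃ L, G.IsBicliqueCover d L ∧ L.length = n}.Nonempty := ⟨L.length, L, h, rfl⟩
  exact Nat.sInf_mem hne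

lemma bcd_le {W : Type*} [DecidableEq W] {G : SimpleGraph W} {d : ℕ}
    {L : List (Finset W × Finset W)} (h : G.IsBicliqueCover d L) : G.bcd d ≤ L.length :=
  Nat.sInf_le ⟨L, h, rfl⟩

lemma joinFam_adj_same {ι : Type*} {V : ι → Type*} (G : ∀ i, SimpleGraph (V i)) {i : ι}
    {x y : V i} (h : (joinFam G).Adj ⟨i, x⟩ ⟨i, y⟩) : (G i).Adj x y := by
  rcases h with h | ⟨j, a, b, hab, h1, h2⟩
  · exact absurd rfl h
  · obtain ⟨rfl, h1⟩ := Sigma.mk.inj_iff.mp h1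
    obtain ⟨-, h2⟩ := Sigma.mk.inj_iff.mp h2
    rw [eq_of_heq h1, eq_of_heq h2]
    exact hab

lemma list_eq_map_getD {α : Type*} (l : List α) (a : α) :
    l = (List.range l.length).map fun j => l.getD j a := by
  apply List.ext_getElem
  · simp
  · intro n h1 h2
    simp [List.getD_eq_getElem l a, List.getElem?_eq_getElem h1]

end Helpers

lemma countP_eq_countP_range {α : Type*} (l : List α) (a : α) (p : α → Bool) :
    l.countP p = (List.range l.length).countP fun j => p (l.getD j a) := by
  conv_lhs => rw [list_eq_map_getD l a]
  rw [List.countP_map]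
  rfl
theorem stmt_9 {k : ℕ} (hk : 0 < k) (V : Fin k → Type*) [∀ i, Fintype (V i)]
    [∀ i, DecidableEq (V i)] (G : ∀ i, SimpleGraph (V i)) (d : ℕ) (hd : 0 < d) :
    (Finset.univ.sup fun i => (G i).bcd d) ≤ (joinFam G).bcd d ∧
      (joinFam G).bcd d ≤
        (Finset.univ.sup fun i => (G i).bcd d) + (⊤ : SimpleGraph (Fin k)).bcd d := by
  classical
  constructor
  · -- lower bound
    obtain ⟨L, ⟨hBic, hCov⟩, hLen⟩ := bcd_spec (joinFam G) d
    refine Finset.sup_le fun i _ => ?_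
    rw [← hLen]
    have : (L.map fun p => ((Finset.univ.filter fun x => (⟨i, x⟩ : Σ j, V j) ∈ p.1),
        (Finset.univ.filter fun y => (⟨i, y⟩ : Σ j, V j) ∈ p.2))).length = L.length := by
      simp
    rw [← this]
    apply bcd_le
    constructor
    · intro p hp
      simp only [List.mem_map] at hp
      obtain ⟨q, hq, rfl⟩ := hp
      obtain ⟨hdisj, hadj⟩ := hBic q hq
      constructor
      · rw [Finset.disjoint_left]
        intro x hx1 hx2
        simp only [Finset.mem_filter, Finset.mem_univ, true_and] at hx1 hx2
        exact Finset.disjoint_left.mp hdisj hx1 hx2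
      · intro x hx y hy
        simp only [Finset.mem_filter, Finset.mem_univ, true_and] at hx hy
        exact joinFam_adj_same G (hadj _ hx _ hy)
    · intro e he
      induction e with
      | _ x y =>
        rw [SimpleGraph.mem_edgeSet] at he
        have hmem : s((⟨i, x⟩ : Σ j, V j), (⟨i, y⟩ : Σ j, V j)) ∈ (joinFam G).edgeSet :=
          Or.inr ⟨i, x, y, he, rfl, rfl⟩
        refine le_trans (hCov _ hmem) ?_
        rw [List.countP_map]
        apply List.countP_mono_left
        intro q hq hcov
        simp only [Function.comp_apply, decide_eq_true_eq] at hcov ⊢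
        obtain ⟨a, ha, b, hb, heq⟩ := hcov
        rcases Sym2.eq_iff.mp heq with ⟨h1, h2⟩ | ⟨h1, h2⟩
        · subst h1; subst h2
          exact ⟨x, by simp [ha], y, by simp [hb], rfl⟩
        · subst h1; subst h2
          exact ⟨y, by simp [ha], x, by simp [hb], Sym2.eq_swap⟩
  · -- upper bound
    have hP : ∀ i, ∃ P : List (Finset (V i) × Finset (V i)),
        (G i).IsBicliqueCover d P ∧ P.length = Finset.univ.sup fun j => (G j).bcd d := by
      intro i
      obtain ⟨L, hL, hlen⟩ := bcd_spec (G i) d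
      have hle : L.length ≤ Finset.univ.sup fun j => (G j).bcd d := by
        rw [hlen]; exact Finset.le_sup (f := fun j => (G j).bcd d) (Finset.mem_univ i)
      refine ⟨L ++ List.replicate ((Finset.univ.sup fun j => (G j).bcd d) - L.length) (∅, ∅),
        ⟨?_, ?_⟩, by simp [Nat.add_sub_cancel' hle]⟩
      · intro p hp
        rcases List.mem_append.mp hp with h | h
        · exact hL.1 p h
        · rw [List.eq_of_mem_replicate h]
          exact ⟨Finset.disjoint_empty_left _, by simp⟩
      · intro e he
        rw [List.countP_append]
        exact le_trans (hL.2 e he) (Nat.le_add_right _ _)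
    choose P hPcov hPlen using hP
    set m := Finset.univ.sup fun j => (G j).bcd d with hm
    obtain ⟨M, ⟨hMBic, hMCov⟩, hMLen⟩ := bcd_spec (⊤ : SimpleGraph (Fin k)) d
    have hq : ∀ i j, (G i).IsBiclique ((P i).getD j (∅, ∅)).1 ((P i).getD j (∅, ∅)).2 := by
      intro i j
      by_cases h : j < (P i).length
      · rw [List.getD_eq_getElem _ _ h]
        exact (hPcov i).1 _ (List.getElem_mem h)
      · rw [List.getD_eq_default _ _ (le_of_not_gt h)]
        exact ⟨Finset.disjoint_empty_left _, by simp⟩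
    set F : ℕ → Finset (Σ i, V i) × Finset (Σ i, V i) := fun j =>
      (Finset.univ.biUnion fun i => ((P i).getD j (∅, ∅)).1.image (Sigma.mk i),
       Finset.univ.biUnion fun i => ((P i).getD j (∅, ∅)).2.image (Sigma.mk i)) with hF
    set liftT : Finset (Fin k) → Finset (Σ i, V i) := fun A =>
      A.biUnion fun i => Finset.univ.image (Sigma.mk i) with hliftT
    have memF1 : ∀ j (i : Fin k) (x : V i),
        (⟨i, x⟩ : Σ i, V i) ∈ (F j).1 ↔ x ∈ ((P i).getD j (∅, ∅)).1 := by
      intro j i x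
      simp only [hF, Finset.mem_biUnion, Finset.mem_univ, true_and, Finset.mem_image]
      constructor
      · rintro ⟨i', a, ha, h⟩
        obtain ⟨rfl, h2⟩ := Sigma.mk.inj_iff.mp h.symm
        rwa [eq_of_heq h2]
      · exact fun h => ⟨i, x, h, rfl⟩
    have memF2 : ∀ j (i : Fin k) (x : V i),
        (⟨i, x⟩ : Σ i, V i) ∈ (F j).2 ↔ x ∈ ((P i).getD j (∅, ∅)).2 := by
      intro j i x
      simp only [hF, Finset.mem_biUnion, Finset.mem_univ, true_and, Finset.mem_image]
      constructor
      · rintro ⟨i', a, ha, h⟩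
        obtain ⟨rfl, h2⟩ := Sigma.mk.inj_iff.mp h.symm
        rwa [eq_of_heq h2]
      · exact fun h => ⟨i, x, h, rfl⟩
    have memLift : ∀ (A : Finset (Fin k)) (i : Fin k) (x : V i),
        (⟨i, x⟩ : Σ i, V i) ∈ liftT A ↔ i ∈ A := by
      intro A i x
      simp only [hliftT, Finset.mem_biUnion, Finset.mem_image, Finset.mem_univ, true_and]
      constructor
      · rintro ⟨i', hi', a, h⟩
        obtain ⟨rfl, -⟩ := Sigma.mk.inj_iff.mp h.symm
        exact hi'
      · exact fun h => ⟨i, h, x, rfl⟩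
    have hlenC : ((List.range m).map F ++ M.map fun p => (liftT p.1, liftT p.2)).length
        = m + (⊤ : SimpleGraph (Fin k)).bcd d := by
      simp [hMLen]
    rw [← hlenC]
    apply bcd_le
    constructor
    · -- all pieces are bicliques
      intro p hp
      rcases List.mem_append.mp hp with h | h
      · simp only [List.mem_map, List.mem_range] at h
        obtain ⟨j, -, rfl⟩ := h
        constructor
        · rw [Finset.disjoint_left]
          rintro ⟨i, x⟩ h1 h2
          rw [memF1] at h1
          rw [memF2] at h2
          exact Finset.disjoint_left.mp (hq i j).1 h1 h2
        · rintro ⟨i, x⟩ h1 ⟨i', y⟩ h2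
          by_cases hij : i = i'
          · subst hij
            rw [memF1] at h1
            rw [memF2] at h2
            exact Or.inr ⟨i, x, y, (hq i j).2 x h1 y h2, rfl, rfl⟩
          · exact Or.inl hij
      · simp only [List.mem_map] at h
        obtain ⟨r, hr, rfl⟩ := h
        constructor
        · rw [Finset.disjoint_left]
          rintro ⟨i, x⟩ h1 h2
          rw [memLift] at h1 h2
          exact Finset.disjoint_left.mp (hMBic r hr).1 h1 h2
        · rintro ⟨i, x⟩ h1 ⟨i', y⟩ h2
          rw [memLift] at h1 h2
          have : i ≠ i' := fun hii => Finset.disjoint_left.mp (hMBic r hr).1 h1 (hii ▸ h2)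
          exact Or.inl this
    · -- coverage
      rintro e he
      induction e with
      | _ z w =>
        rcases z with ⟨i, x⟩
        rcases w with ⟨i', y⟩
        rw [SimpleGraph.mem_edgeSet] at he
        rw [List.countP_append]
        by_cases hij : i = i'
        · -- within a component
          subst hij
          have hadj : (G i).Adj x y := joinFam_adj_same G he
          have h1 := (hPcov i).2 s(x, y) hadj
          rw [countP_eq_countP_range (P i) (∅, ∅), hPlen i] at h1
          refine le_trans (le_trans h1 ?_) (Nat.le_add_right _ _)
          rw [List.countP_map]
          apply List.countP_mono_left
          intro j hj hcov
          simp only [Function.comp_apply, decide_eq_true_eq] at hcov ⊢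
          obtain ⟨a, ha, b, hb, heq⟩ := hcov
          rcases Sym2.eq_iff.mp heq with ⟨h1, h2⟩ | ⟨h1, h2⟩ <;> subst h1 <;> subst h2
          · exact ⟨⟨i, x⟩, (memF1 j i x).mpr ha, ⟨i, y⟩, (memF2 j i y).mpr hb, rfl⟩
          · exact ⟨⟨i, y⟩, (memF1 j i y).mpr ha, ⟨i, x⟩, (memF2 j i x).mpr hb, Sym2.eq_swap⟩
        · -- cross edge
          have hKadj : s(i, i') ∈ (⊤ : SimpleGraph (Fin k)).edgeSet := by
            rw [SimpleGraph.mem_edgeSet]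
            exact hij
          have h1 := hMCov _ hKadj
          refine le_trans (le_trans h1 ?_) (Nat.le_add_left _ _)
          rw [List.countP_map]
          apply List.countP_mono_left
          intro r hr hcov
          simp only [Function.comp_apply, decide_eq_true_eq] at hcov ⊢
          obtain ⟨a, ha, b, hb, heq⟩ := hcov
          rcases Sym2.eq_iff.mp heq with ⟨h1, h2⟩ | ⟨h1, h2⟩ <;> subst h1 <;> subst h2
          · exact ⟨⟨i, x⟩, (memLift r.1 i x).mpr ha, ⟨i', y⟩, (memLift r.2 i' y).mpr hb, rfl⟩
          · exact ⟨⟨i', y⟩, (memLift r.1 i' y).mpr ha, ⟨i, x⟩, (memLift r.2 i x).mpr hb,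
              Sym2.eq_swap⟩
end

section
/- For all positive integers d and n, bc_d(K_n) ≤ bc_d(K_{n^2}) ≤ 2·bc_d(K_n). -/
open Finset

section Aux

variable {V W : Type*}

/-- Pull back a `d`-biclique cover of the complete graph along an injection. -/
lemma pullback_cover [Fintype V] [DecidableEq V] [DecidableEq W] {d : ℕ}
    (f : V → W) (hf : Function.Injective f)
    (L : List (Finset W × Finset W)) (hL : (⊤ : SimpleGraph W).IsBicliqueCover d L) :
    (⊤ : SimpleGraph V).IsBicliqueCover d
      (L.map fun p => ((univ : Finset V).filter (fun x => f x ∈ p.1),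
                       (univ : Finset V).filter (fun x => f x ∈ p.2))) := by
  obtain ⟨hB, hC⟩ := hL
  constructor
  · rintro q hq
    simp only [List.mem_map] at hq
    obtain ⟨p, hp, rfl⟩ := hq
    obtain ⟨hdisj, _⟩ := hB p hp
    constructor
    · rw [Finset.disjoint_left]
      intro x hx hx'
      simp only [mem_filter] at hx hx'
      exact (Finset.disjoint_left.mp hdisj hx.2) hx'.2
    · intro x hx y hy
      simp only [mem_filter] at hx hy
      simp only [SimpleGraph.top_adj]
      rintro rfl
      exact (Finset.disjoint_left.mp hdisj hx.2) hy.2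
  · intro e he
    induction e using Sym2.ind with
    | _ u v =>
    rw [SimpleGraph.mem_edgeSet, SimpleGraph.top_adj] at he
    have he' : s(f u, f v) ∈ (⊤ : SimpleGraph W).edgeSet := by
      rw [SimpleGraph.mem_edgeSet, SimpleGraph.top_adj]
      exact fun h => he (hf h)
    refine le_trans (hC _ he') ?_
    rw [List.countP_map]
    refine List.countP_mono_left ?_
    intro p _ hp
    simp only [Function.comp, decide_eq_true_eq, mem_filter, mem_univ, true_and] at hp ⊢
    obtain ⟨x, hx, y, hy, hxy⟩ := hp
    rw [Sym2.eq_iff] at hxy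
    rcases hxy with ⟨h1, h2⟩ | ⟨h1, h2⟩
    · exact ⟨u, by rw [h1]; exact hx, v, by rw [h2]; exact hy, rfl⟩
    · exact ⟨v, by rw [h2]; exact hx, u, by rw [h1]; exact hy, Sym2.eq_swap⟩

/-- From a `d`-biclique cover of `K_V` of length `m`, a cover of `K_{V×V}` of length `2m`. -/
lemma prod_cover [Fintype V] [DecidableEq V] {d : ℕ}
    (L : List (Finset V × Finset V)) (hL : (⊤ : SimpleGraph V).IsBicliqueCover d L) :
    (⊤ : SimpleGraph (V × V)).IsBicliqueCover d
      ((L.map fun p => (p.1 ×ˢ (univ : Finset V), p.2 ×ˢ (univ : Finset V))) ++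
       (L.map fun p => ((univ : Finset V) ×ˢ p.1, (univ : Finset V) ×ˢ p.2))) := by
  obtain ⟨hB, hC⟩ := hL
  constructor
  · rintro q hq
    rw [List.mem_append] at hq
    rcases hq with hq | hq <;>
    · simp only [List.mem_map] at hq
      obtain ⟨p, hp, rfl⟩ := hq
      obtain ⟨hdisj, _⟩ := hB p hp
      constructor
      · rw [Finset.disjoint_left]
        intro x hx hx'
        simp only [Finset.mem_product, mem_univ] at hx hx'
        first
        | exact (Finset.disjoint_left.mp hdisj hx.1) hx'.1
        | exact (Finset.disjoint_left.mp hdisj hx.2) hx'.2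
      · intro x hx y hy
        simp only [Finset.mem_product, mem_univ] at hx hy
        simp only [SimpleGraph.top_adj]
        rintro rfl
        first
        | exact (Finset.disjoint_left.mp hdisj hx.1) hy.1
        | exact (Finset.disjoint_left.mp hdisj hx.2) hy.2
  · intro e he
    induction e using Sym2.ind with
    | _ u v =>
    rw [SimpleGraph.mem_edgeSet, SimpleGraph.top_adj] at he
    rw [List.countP_append]
    by_cases h1 : u.1 = v.1
    · -- first coordinates equal, second differ; use the second family
      have h2 : u.2 ≠ v.2 := fun h => he (Prod.ext h1 h)
      have he' : s(u.2, v.2) ∈ (⊤ : SimpleGraph V).edgeSet := by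
        rwa [SimpleGraph.mem_edgeSet, SimpleGraph.top_adj]
      refine le_trans (hC _ he') (le_trans ?_ (Nat.le_add_left _ _))
      rw [List.countP_map]
      refine List.countP_mono_left ?_
      intro p _ hp
      simp only [Function.comp, decide_eq_true_eq, Finset.mem_product, mem_univ,
        true_and] at hp ⊢
      obtain ⟨x, hx, y, hy, hxy⟩ := hp
      rw [Sym2.eq_iff] at hxy
      rcases hxy with ⟨ha, hb⟩ | ⟨ha, hb⟩
      · exact ⟨u, by rw [ha]; exact hx, v, by rw [hb]; exact hy, rfl⟩
      · exact ⟨v, by rw [hb]; exact hx, u, by rw [ha]; exact hy, Sym2.eq_swap⟩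
    · -- first coordinates differ; use the first family
      have he' : s(u.1, v.1) ∈ (⊤ : SimpleGraph V).edgeSet := by
        rwa [SimpleGraph.mem_edgeSet, SimpleGraph.top_adj]
      refine le_trans (hC _ he') (le_trans ?_ (Nat.le_add_right _ _))
      rw [List.countP_map]
      refine List.countP_mono_left ?_
      intro p _ hp
      simp only [Function.comp, decide_eq_true_eq, Finset.mem_product, mem_univ,
        and_true] at hp ⊢
      obtain ⟨x, hx, y, hy, hxy⟩ := hp
      rw [Sym2.eq_iff] at hxy
      rcases hxy with ⟨ha, hb⟩ | ⟨ha, hb⟩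
      · exact ⟨u, by rw [ha]; exact hx, v, by rw [hb]; exact hy, rfl⟩
      · exact ⟨v, by rw [hb]; exact hx, u, by rw [ha]; exact hy, Sym2.eq_swap⟩

/-- The complete graph on a finite type always has some `d`-biclique cover. -/
lemma exists_cover [Fintype V] [DecidableEq V] (d : ℕ) :
    ∃ L, (⊤ : SimpleGraph V).IsBicliqueCover d L := by
  classical
  set L0 : List (Finset V × Finset V) :=
    (((univ : Finset (V × V)).filter fun p => p.1 ≠ p.2).toList.map
      fun p => ({p.1}, {p.2})) with hL0
  refine ⟨(List.replicate d L0).flatten, ?_, ?_⟩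
  · intro p hp
    rw [List.mem_flatten] at hp
    obtain ⟨l, hl, hpl⟩ := hp
    rw [List.eq_of_mem_replicate hl] at hpl
    simp only [hL0, List.mem_map, Finset.mem_toList, mem_filter, mem_univ, true_and] at hpl
    obtain ⟨q, hq, rfl⟩ := hpl
    refine ⟨by simp only [Finset.disjoint_singleton]; exact hq, ?_⟩
    intro x hx y hy
    simp only [mem_singleton] at hx hy
    simp only [SimpleGraph.top_adj]
    rw [hx, hy]
    exact hq
  · intro e he
    induction e using Sym2.ind with
    | _ u v =>
    rw [SimpleGraph.mem_edgeSet, SimpleGraph.top_adj] at he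
    rw [List.countP_flatten]
    simp only [List.map_replicate, List.sum_replicate, smul_eq_mul]
    have : 0 < L0.countP fun p => decide (∃ x ∈ p.1, ∃ y ∈ p.2, s(u, v) = s(x, y)) := by
      rw [List.countP_pos_iff]
      refine ⟨({u}, {v}), ?_, ?_⟩
      · simp only [hL0, List.mem_map, Finset.mem_toList, mem_filter, mem_univ, true_and]
        exact ⟨(u, v), he, rfl⟩
      · simp only [decide_eq_true_eq, mem_singleton]
        exact ⟨u, rfl, v, rfl, rfl⟩
    calc d = d * 1 := (Nat.mul_one d).symm
    _ ≤ _ := Nat.mul_le_mul_left d this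

lemma bcd_le_length [DecidableEq V] {d : ℕ} (L : List (Finset V × Finset V))
    (hL : (⊤ : SimpleGraph V).IsBicliqueCover d L) :
    (⊤ : SimpleGraph V).bcd d ≤ L.length :=
  Nat.sInf_le ⟨L, hL, rfl⟩

lemma exists_optimal [Fintype V] [DecidableEq V] (d : ℕ) :
    ∃ L, (⊤ : SimpleGraph V).IsBicliqueCover d L ∧
      L.length = (⊤ : SimpleGraph V).bcd d := by
  obtain ⟨L0, hL0⟩ := exists_cover (V := V) d
  have hne : {m | ∃ L, (⊤ : SimpleGraph V).IsBicliqueCover d L ∧ L.length = m}.Nonempty :=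
    ⟨L0.length, L0, hL0, rfl⟩
  exact Nat.sInf_mem hne

end Aux

theorem stmt_11 (n d : ℕ) (hn : 0 < n) (hd : 0 < d) :
    (⊤ : SimpleGraph (Fin n)).bcd d ≤ (⊤ : SimpleGraph (Fin (n ^ 2))).bcd d ∧
      (⊤ : SimpleGraph (Fin (n ^ 2))).bcd d ≤ 2 * (⊤ : SimpleGraph (Fin n)).bcd d := by
  constructor
  · obtain ⟨L, hL, hlen⟩ := exists_optimal (V := Fin (n ^ 2)) d
    have hle : n ≤ n ^ 2 := by nlinarith
    have h := pullback_cover (Fin.castLE hle) (Fin.castLE_injective hle) L hL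
    have := bcd_le_length _ h
    simpa [hlen] using this
  · obtain ⟨L, hL, hlen⟩ := exists_optimal (V := Fin n) d
    have hprod := prod_cover L hL
    have e : Fin (n ^ 2) ≃ Fin n × Fin n :=
      (finCongr (by ring : n ^ 2 = n * n)).trans finProdFinEquiv.symm
    have h := pullback_cover (V := Fin (n ^ 2)) (W := Fin n × Fin n) e e.injective _ hprod
    have hfin := bcd_le_length _ h
    simp only [List.length_map, List.length_append] at hfin
    omega
end

section
/- Let G be a C_4-free graph (containing no cycle of length 4 as a subgraph) whose minimum vertex cover number β(G) equals its maximum matching number α'(G). Then for every positive integer d, bc_d(G) = d·β(G). -/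
open Finset

/-- `G` contains no 4-cycle. -/
def SimpleGraph.C4Free {V : Type*} (G : SimpleGraph V) : Prop :=
  ∀ a b c d : V, a ≠ c → b ≠ d →
    G.Adj a b → G.Adj b c → G.Adj c d → G.Adj d a → False

/-- `β(G)`: the minimum vertex cover number. -/
noncomputable def SimpleGraph.minVertexCoverNum {V : Type*} (G : SimpleGraph V) : ℕ :=
  sInf {n | ∃ S : Finset V, (∀ e ∈ G.edgeSet, ∃ v ∈ S, v ∈ e) ∧ S.card = n}

/-- `α'(G)`: the maximum matching number. -/
noncomputable def SimpleGraph.matchingNum {V : Type*} (G : SimpleGraph V) : ℕ :=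
  sSup {n | ∃ M : Finset (Sym2 V), ↑M ⊆ G.edgeSet ∧
    (M : Set (Sym2 V)).Pairwise (fun e f => ∀ v, v ∈ e → v ∉ f) ∧ M.card = n}

lemma sum_countP_le_s14 {α β : Type*} (M : Finset α) (L : List β) (P : α → β → Bool)
    (h : ∀ b ∈ L, ∀ a₁ ∈ M, ∀ a₂ ∈ M, P a₁ b → P a₂ b → a₁ = a₂) :
    ∑ a ∈ M, L.countP (P a) ≤ L.length := by
  classical
  induction L with
  | nil => simp
  | cons b l ih =>
    simp only [List.countP_cons, List.length_cons, Finset.sum_add_distrib]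
    have h1 : ∑ a ∈ M, (if P a b then 1 else 0) ≤ 1 := by
      rw [← Finset.card_filter]
      refine Finset.card_le_one.mpr ?_
      intro a₁ ha₁ a₂ ha₂
      simp only [Finset.mem_filter] at ha₁ ha₂
      exact h b (List.mem_cons_self) a₁ ha₁.1 a₂ ha₂.1 ha₁.2 ha₂.2
    have h2 := ih (fun b hb => h b (List.mem_cons_of_mem _ hb))
    omega

theorem stmt_14 {V : Type*} [Fintype V] [DecidableEq V] (G : SimpleGraph V)
    (hC4 : G.C4Free) (hβα : G.minVertexCoverNum = G.matchingNum) (d : ℕ) (hd : 0 < d) :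
    G.bcd d = d * G.minVertexCoverNum := by
  classical
  haveI : DecidableRel G.Adj := Classical.decRel _
  -- obtain a minimum vertex cover
  obtain ⟨S, hScov, hScard⟩ :
      ∃ S : Finset V, (∀ e ∈ G.edgeSet, ∃ v ∈ S, v ∈ e) ∧ S.card = G.minVertexCoverNum := by
    have hne : {n | ∃ S : Finset V, (∀ e ∈ G.edgeSet, ∃ v ∈ S, v ∈ e) ∧ S.card = n}.Nonempty := by
      refine ⟨Finset.univ.card, Finset.univ, fun e _ => ?_, rfl⟩
      induction e using Sym2.ind with
      | _ a b => exact ⟨a, Finset.mem_univ a, by simp⟩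
    exact Nat.sInf_mem hne
  -- the star cover
  set L₀ : List (Finset V × Finset V) :=
    S.toList.map (fun v => ({v}, G.neighborFinset v)) with hL₀
  set L : List (Finset V × Finset V) := (List.replicate d L₀).flatten with hL
  have hLlen : L.length = d * G.minVertexCoverNum := by
    simp [hL, hL₀, List.length_flatten, List.map_replicate, List.sum_replicate, smul_eq_mul, hScard]
  have hLcov : G.IsBicliqueCover d L := by
    constructor
    · intro p hp
      rw [hL, List.mem_flatten] at hp
      obtain ⟨l, hl, hpl⟩ := hp
      rw [List.mem_replicate] at hl
      rw [hl.2, hL₀, List.mem_map] at hpl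
      obtain ⟨v, _, rfl⟩ := hpl
      refine ⟨by simp [G.irrefl], ?_⟩
      intro x hx y hy
      simp only [Finset.mem_singleton] at hx
      subst hx
      exact (G.mem_neighborFinset _ _).mp hy
    · intro e he
      have h1 : 1 ≤ L₀.countP (fun p => decide (∃ x ∈ p.1, ∃ y ∈ p.2, e = s(x, y))) := by
        rw [Nat.one_le_iff_ne_zero, ← Nat.pos_iff_ne_zero, List.countP_pos_iff]
        obtain ⟨v, hvS, hve⟩ := hScov e he
        refine ⟨({v}, G.neighborFinset v), ?_, ?_⟩
        · exact List.mem_map.mpr ⟨v, Finset.mem_toList.mpr hvS, rfl⟩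
        · rw [decide_eq_true_eq]
          induction e using Sym2.ind with
          | _ a b =>
            have hab : G.Adj a b := he
            rcases Sym2.mem_iff.mp hve with rfl | rfl
            · exact ⟨v, Finset.mem_singleton_self v, b,
                (G.mem_neighborFinset _ _).mpr hab, rfl⟩
            · exact ⟨v, Finset.mem_singleton_self v, a,
                (G.mem_neighborFinset _ _).mpr hab.symm, Sym2.eq_swap⟩
      calc d = d * 1 := (mul_one d).symm
        _ ≤ d * L₀.countP _ := Nat.mul_le_mul_left d h1
        _ = L.countP _ := by
            rw [hL, List.countP_flatten, List.map_replicate, List.sum_replicate, smul_eq_mul]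
  -- upper bound
  have hub : G.bcd d ≤ d * G.minVertexCoverNum :=
    Nat.sInf_le ⟨L, hLcov, hLlen⟩
  -- obtain a maximum matching
  obtain ⟨M, hMsub, hMpair, hMcard⟩ :
      ∃ M : Finset (Sym2 V), ↑M ⊆ G.edgeSet ∧
        (M : Set (Sym2 V)).Pairwise (fun e f => ∀ v, v ∈ e → v ∉ f) ∧
        M.card = G.matchingNum := by
    have hne : {n | ∃ M : Finset (Sym2 V), ↑M ⊆ G.edgeSet ∧
        (M : Set (Sym2 V)).Pairwise (fun e f => ∀ v, v ∈ e → v ∉ f) ∧ M.card = n}.Nonempty :=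
      ⟨0, ∅, by simp, by simp, by simp⟩
    have hbd : BddAbove {n | ∃ M : Finset (Sym2 V), ↑M ⊆ G.edgeSet ∧
        (M : Set (Sym2 V)).Pairwise (fun e f => ∀ v, v ∈ e → v ∉ f) ∧ M.card = n} := by
      refine ⟨Fintype.card (Sym2 V), fun n hn => ?_⟩
      obtain ⟨M, _, _, rfl⟩ := hn
      exact Finset.card_le_univ M
    exact Nat.sSup_mem hne hbd
  -- lower bound
  have hlb : d * G.minVertexCoverNum ≤ G.bcd d := by
    have hne : {n | ∃ L', G.IsBicliqueCover d L' ∧ L'.length = n}.Nonempty :=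
      ⟨_, L, hLcov, rfl⟩
    obtain ⟨L', hL'cov, hL'len⟩ := Nat.sInf_mem hne
    rw [hβα, ← hMcard, SimpleGraph.bcd, ← hL'len]
    have key : ∑ e ∈ M, L'.countP
        (fun p => decide (∃ x ∈ p.1, ∃ y ∈ p.2, e = s(x, y))) ≤ L'.length := by
      refine sum_countP_le_s14 M L' _ ?_
      intro p hp e₁ he₁ e₂ he₂ h₁ h₂
      by_contra hne'
      rw [decide_eq_true_eq] at h₁ h₂
      obtain ⟨x₁, hx₁, y₁, hy₁, rfl⟩ := h₁
      obtain ⟨x₂, hx₂, y₂, hy₂, rfl⟩ := h₂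
      have hdisj := hMpair (Finset.mem_coe.mpr he₁) (Finset.mem_coe.mpr he₂) hne'
      have hB := hL'cov.1 p hp
      have hxne : x₁ ≠ x₂ := by
        intro h; exact hdisj x₁ (Sym2.mem_mk_left _ _) (h ▸ Sym2.mem_mk_left _ _)
      have hyne : y₁ ≠ y₂ := by
        intro h; exact hdisj y₁ (Sym2.mem_mk_right _ _) (h ▸ Sym2.mem_mk_right _ _)
      exact hC4 x₁ y₁ x₂ y₂ hxne hyne (hB.2 x₁ hx₁ y₁ hy₁) (hB.2 x₂ hx₂ y₁ hy₁).symm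
        (hB.2 x₂ hx₂ y₂ hy₂) (hB.2 x₁ hx₁ y₂ hy₂).symm
    calc d * M.card = ∑ _e ∈ M, d := by rw [Finset.sum_const, smul_eq_mul, mul_comm]
      _ ≤ ∑ e ∈ M, L'.countP (fun p => decide (∃ x ∈ p.1, ∃ y ∈ p.2, e = s(x, y))) :=
          Finset.sum_le_sum (fun e he => hL'cov.2 e (hMsub he))
      _ ≤ L'.length := key
  omega
end

section
/- In a C_4-free graph G, every biclique of G is a star (i.e., one side of the bipartition has exactly one vertex) or a single edge, and consequently bc(G) = β(G), the minimum vertex cover number. -/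
open Finset

theorem stmt_15 {V : Type*} [Fintype V] [DecidableEq V] (G : SimpleGraph V)
    (hC4 : G.C4Free) :
    (∀ X Y : Finset V, G.IsBiclique X Y → X.card ≤ 1 ∨ Y.card ≤ 1) ∧
      G.bcd 1 = G.minVertexCoverNum := by
  have star : ∀ X Y : Finset V, G.IsBiclique X Y → X.card ≤ 1 ∨ Y.card ≤ 1 := by
    rintro X Y ⟨hdis, hadj⟩
    by_contra h
    push_neg at h
    obtain ⟨hX, hY⟩ := h
    obtain ⟨x1, hx1, x2, hx2, hxne⟩ := Finset.one_lt_card.mp hX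
    obtain ⟨y1, hy1, y2, hy2, hyne⟩ := Finset.one_lt_card.mp hY
    exact hC4 x1 y1 x2 y2 hxne hyne (hadj x1 hx1 y1 hy1)
      ((hadj x2 hx2 y1 hy1).symm) (hadj x2 hx2 y2 hy2) ((hadj x1 hx1 y2 hy2).symm)
  refine ⟨star, ?_⟩
  classical
  unfold SimpleGraph.bcd SimpleGraph.minVertexCoverNum
  -- from a vertex cover, build a star biclique cover of the same size
  have coverToL : ∀ S : Finset V, (∀ e ∈ G.edgeSet, ∃ v ∈ S, v ∈ e) →
      ∃ L, G.IsBicliqueCover 1 L ∧ L.length = S.card := by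
    classical
    intro S hS
    refine ⟨S.toList.map (fun v => ({v}, G.neighborFinset v)), ⟨?_, ?_⟩, by simp⟩
    · intro p hp
      simp only [List.mem_map, Finset.mem_toList] at hp
      obtain ⟨v, hv, rfl⟩ := hp
      refine ⟨?_, ?_⟩
      · simp [Finset.disjoint_singleton_left]
      · intro x hx y hy
        simp only [Finset.mem_singleton] at hx
        subst hx
        exact (G.mem_neighborFinset _ _).mp hy
    · intro e he
      obtain ⟨v, hvS, hve⟩ := hS e he
      induction e using Sym2.ind with
      | _ x y =>
        rw [SimpleGraph.mem_edgeSet] at he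
        rw [Sym2.mem_iff] at hve
        refine List.countP_pos_iff.mpr ⟨({v}, G.neighborFinset v), ?_, ?_⟩
        · exact List.mem_map.mpr ⟨v, Finset.mem_toList.mpr hvS, rfl⟩
        · simp only [decide_eq_true_iff]
          rcases hve with rfl | rfl
          · exact ⟨v, Finset.mem_singleton_self v, y, (G.mem_neighborFinset _ _).mpr he, rfl⟩
          · exact ⟨v, Finset.mem_singleton_self v, x, (G.mem_neighborFinset _ _).mpr he.symm,
              Sym2.eq_swap⟩
  -- the vertex cover set is nonempty (univ is a cover)
  have huniv : ∀ e ∈ G.edgeSet, ∃ v ∈ (Finset.univ : Finset V), v ∈ e := by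
    intro e he
    induction e using Sym2.ind with
    | _ x y => exact ⟨x, Finset.mem_univ x, Sym2.mem_mk_left x y⟩
  have hvcne : {n | ∃ S : Finset V, (∀ e ∈ G.edgeSet, ∃ v ∈ S, v ∈ e) ∧ S.card = n}.Nonempty :=
    ⟨(Finset.univ : Finset V).card, Finset.univ, huniv, rfl⟩
  obtain ⟨S, hScov, hScard⟩ := Nat.sInf_mem hvcne
  obtain ⟨L, hL, hLlen⟩ := coverToL S hScov
  have hle1 : sInf {n | ∃ L, G.IsBicliqueCover 1 L ∧ L.length = n} ≤
      sInf {n | ∃ S : Finset V, (∀ e ∈ G.edgeSet, ∃ v ∈ S, v ∈ e) ∧ S.card = n} :=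
    Nat.sInf_le ⟨L, hL, hLlen.trans hScard⟩
  have hbcdne : {n | ∃ L, G.IsBicliqueCover 1 L ∧ L.length = n}.Nonempty :=
    ⟨L.length, L, hL, rfl⟩
  obtain ⟨L0, hL0, hL0len⟩ := Nat.sInf_mem hbcdne
  -- build a vertex cover from the biclique cover
  set pick : Finset V × Finset V → Finset V := fun p => if p.1.card ≤ 1 then p.1 else p.2 with hpickdef
  have hpick_card : ∀ p, G.IsBiclique p.1 p.2 → (pick p).card ≤ 1 := by
    intro p hp
    by_cases h : p.1.card ≤ 1
    · simp [hpickdef, h]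
    · simp only [hpickdef, if_neg h]
      rcases star _ _ hp with h1 | h2
      · exact absurd h1 h
      · exact h2
  set S0 : Finset V := L0.foldr (fun q s => pick q ∪ s) ∅ with hS0def
  have hmem : ∀ (l : List (Finset V × Finset V)) p, p ∈ l →
      pick p ⊆ l.foldr (fun q s => pick q ∪ s) ∅ := by
    intro l
    induction l with
    | nil => intro p hp; exact absurd hp List.not_mem_nil
    | cons a t ih =>
      intro p hp
      rcases List.mem_cons.mp hp with rfl | hp'
      · exact Finset.subset_union_left
      · exact (ih p hp').trans Finset.subset_union_right
  have hcard : ∀ l : List (Finset V × Finset V), (∀ p ∈ l, (pick p).card ≤ 1) →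
      (l.foldr (fun q s => pick q ∪ s) ∅).card ≤ l.length := by
    intro l
    induction l with
    | nil => simp
    | cons a t ih =>
      intro hl
      calc (pick a ∪ t.foldr (fun q s => pick q ∪ s) ∅).card
          ≤ (pick a).card + (t.foldr (fun q s => pick q ∪ s) ∅).card :=
            Finset.card_union_le _ _
        _ ≤ 1 + t.length := by
            exact Nat.add_le_add (hl a List.mem_cons_self)
              (ih (fun p hp => hl p (List.mem_cons_of_mem a hp)))
        _ = (a :: t).length := by simp [Nat.add_comm]
  have hS0cov : ∀ e ∈ G.edgeSet, ∃ v ∈ S0, v ∈ e := by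
    intro e he
    have h1 := hL0.2 e he
    obtain ⟨p, hpL, hpdec⟩ := List.countP_pos_iff.mp (Nat.lt_of_lt_of_le Nat.zero_lt_one h1)
    simp only [decide_eq_true_iff] at hpdec
    obtain ⟨x, hx, y, hy, rfl⟩ := hpdec
    by_cases h : p.1.card ≤ 1
    · exact ⟨x, hmem L0 p hpL (by simp [hpickdef, h, hx]), Sym2.mem_mk_left x y⟩
    · exact ⟨y, hmem L0 p hpL (by simp [hpickdef, h, hy]), Sym2.mem_mk_right x y⟩
  have hS0card : S0.card ≤ L0.length :=
    hcard L0 (fun p hp => hpick_card p (hL0.1 p hp))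
  have hle2 : sInf {n | ∃ S : Finset V, (∀ e ∈ G.edgeSet, ∃ v ∈ S, v ∈ e) ∧ S.card = n} ≤
      sInf {n | ∃ L, G.IsBicliqueCover 1 L ∧ L.length = n} :=
    le_trans (Nat.sInf_le ⟨S0, hS0cov, rfl⟩) (hL0len ▸ hS0card)
  exact le_antisymm hle1 hle2
end

section
/- For every finite simple graph G and every positive integer d, bc_{2d}(G) ≤ bc_d(M(G)) ≤ 2·bc_d(G) + d, where M(G) is the Mycielski graph of G. -/
open Finset

/-- The Mycielski graph `M(G)`: vertices `inl x` are the original vertices,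
`inr (inl x')` are the twins, and `inr (inr ())` is the root `u`. -/
def mycielski {V : Type*} (G : SimpleGraph V) : SimpleGraph (V ⊕ V ⊕ Unit) where
  Adj p q :=
    match p, q with
    | .inl x, .inl y => G.Adj x y
    | .inl x, .inr (.inl y) => G.Adj x y
    | .inr (.inl x), .inl y => G.Adj x y
    | .inr (.inl _), .inr (.inr _) => True
    | .inr (.inr _), .inr (.inl _) => True
    | _, _ => False
  symm := by
    constructor
    rintro (x | x | x) (y | y | y) h <;> simp_all <;> exact h.symm
  loopless := by
    constructor
    rintro (x | x | x) h <;> simp_all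

/- ### Auxiliary lemmas -/

section Aux

lemma aux_countP_or_le {α : Type*} (L : List α) (p q : α → Bool) :
    L.countP (fun a => p a || q a) ≤ L.countP p + L.countP q := by
  induction L with
  | nil => simp
  | cons a t ih =>
    simp only [List.countP_cons]
    cases hp : p a <;> cases hq : q a <;> simp_all <;> omega

lemma aux_countP_add_le {α : Type*} (L : List α) (p q r : α → Bool)
    (h : ∀ a ∈ L, (p a = true → r a = true) ∧ (q a = true → r a = true) ∧
        ¬(p a = true ∧ q a = true)) :
    L.countP p + L.countP q ≤ L.countP r := by
  induction L with
  | nil => simp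
  | cons a t ih =>
    have ha := h a (by simp)
    have ht : ∀ a ∈ t, (p a = true → r a = true) ∧ (q a = true → r a = true) ∧
        ¬(p a = true ∧ q a = true) := fun x hx => h x (by simp [hx])
    have := ih ht
    simp only [List.countP_cons]
    cases hp : p a <;> cases hq : q a <;> simp_all <;> omega

lemma aux_pred_iff {α : Type*} (X Y : Finset α) (a b : α) :
    (∃ x ∈ X, ∃ y ∈ Y, s(a, b) = s(x, y)) ↔ (a ∈ X ∧ b ∈ Y) ∨ (b ∈ X ∧ a ∈ Y) := by
  simp only [Sym2.eq_iff]; aesop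

/-- Every finite graph has a `d`-biclique cover. -/
lemma aux_exists_cover {W : Type*} [Fintype W] [DecidableEq W] (H : SimpleGraph W) (d : ℕ) :
    ∃ L, H.IsBicliqueCover d L := by
  classical
  set f : Sym2 W → Finset W × Finset W :=
    fun e => (({(Quot.out e).1} : Finset W), ({(Quot.out e).2} : Finset W)) with hf
  set L0 : List (Finset W × Finset W) := H.edgeFinset.toList.map f with hL0
  refine ⟨(List.replicate d L0).flatten, ?_, ?_⟩
  · intro p hp
    rw [List.mem_flatten] at hp
    obtain ⟨l, hl, hpl⟩ := hp
    rw [List.eq_of_mem_replicate hl] at hpl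
    rw [hL0, List.mem_map] at hpl
    obtain ⟨e, he, rfl⟩ := hpl
    rw [Finset.mem_toList, SimpleGraph.mem_edgeFinset] at he
    have hadj : H.Adj (Quot.out e).1 (Quot.out e).2 := by
      rw [← SimpleGraph.mem_edgeSet]
      have : Sym2.mk (Quot.out e).1 (Quot.out e).2 = e := Quot.out_eq e
      rw [show s((Quot.out e).1, (Quot.out e).2) = Sym2.mk (Quot.out e).1 (Quot.out e).2 from rfl, this]
      exact he
    exact ⟨by simp [hf, hadj.ne, hadj.ne'], by simp [hf, hadj]⟩
  · intro e he
    rw [List.countP_flatten, List.map_replicate, List.sum_replicate, smul_eq_mul]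
    have h1 : 1 ≤ L0.countP (fun p => decide (∃ x ∈ p.1, ∃ y ∈ p.2, e = s(x, y))) := by
      rw [Nat.one_le_iff_ne_zero, ← Nat.pos_iff_ne_zero, List.countP_pos_iff]
      refine ⟨f e, ?_, ?_⟩
      · rw [hL0, List.mem_map]
        exact ⟨e, by rwa [Finset.mem_toList, SimpleGraph.mem_edgeFinset], rfl⟩
      · simp only [decide_eq_true_iff, hf]
        exact ⟨(Quot.out e).1, by simp, (Quot.out e).2, by simp, (Quot.out_eq e).symm⟩
    calc d = d * 1 := (mul_one d).symm
    _ ≤ _ := Nat.mul_le_mul_left d h1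

end Aux

section Main

variable {V : Type*} [Fintype V] [DecidableEq V] (G : SimpleGraph V)

local notation "W" => V ⊕ V ⊕ Unit

/-- Project a set of Mycielski vertices to original vertices. -/
def myproj (S : Finset (V ⊕ V ⊕ Unit)) : Finset V :=
  univ.filter (fun v => Sum.inl v ∈ S ∨ Sum.inr (Sum.inl v) ∈ S)

lemma mem_myproj {S : Finset (V ⊕ V ⊕ Unit)} {v : V} :
    v ∈ myproj S ↔ Sum.inl v ∈ S ∨ Sum.inr (Sum.inl v) ∈ S := by
  simp [myproj]

lemma myc_adj_ll {x y : V} : (mycielski G).Adj (Sum.inl x) (Sum.inl y) ↔ G.Adj x y := Iff.rfl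
lemma myc_adj_lt {x y : V} : (mycielski G).Adj (Sum.inl x) (Sum.inr (Sum.inl y)) ↔ G.Adj x y :=
  Iff.rfl
lemma myc_adj_tl {x y : V} : (mycielski G).Adj (Sum.inr (Sum.inl x)) (Sum.inl y) ↔ G.Adj x y :=
  Iff.rfl
lemma myc_adj_tt {x y : V} :
    (mycielski G).Adj (Sum.inr (Sum.inl x)) (Sum.inr (Sum.inl y)) ↔ False := Iff.rfl

lemma lower_cover {d : ℕ} {L : List (Finset (V ⊕ V ⊕ Unit) × Finset (V ⊕ V ⊕ Unit))}
    (h : (mycielski G).IsBicliqueCover d L) :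
    G.IsBicliqueCover (2 * d) (L.map (fun p => (myproj p.1, myproj p.2))) := by
  obtain ⟨hbic, hcov⟩ := h
  constructor
  · rintro p hp
    rw [List.mem_map] at hp
    obtain ⟨⟨X, Y⟩, hXY, rfl⟩ := hp
    obtain ⟨hdisj, hadj⟩ := hbic _ hXY
    constructor
    · rw [Finset.disjoint_left]
      intro v hvX hvY
      rw [mem_myproj] at hvX hvY
      rcases hvX with h1 | h1 <;> rcases hvY with h2 | h2 <;>
        · have := hadj _ h1 _ h2
          simp_all [mycielski, G.irrefl]
    · intro v hv w hw
      rw [mem_myproj] at hv hw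
      rcases hv with h1 | h1 <;> rcases hw with h2 | h2 <;>
        · have := hadj _ h1 _ h2
          first
          | exact this
          | exact absurd this (by simp [mycielski])
  · intro e he
    induction e using Sym2.ind with
    | _ a b =>
    rw [SimpleGraph.mem_edgeSet] at he
    have hc1 := hcov s(Sum.inl a, Sum.inr (Sum.inl b)) ((mycielski G).mem_edgeSet.2 he)
    have hc2 := hcov s(Sum.inr (Sum.inl a), Sum.inl b) ((mycielski G).mem_edgeSet.2 he)
    rw [List.countP_map]
    have key : L.countP (fun p => decide (∃ x ∈ p.1, ∃ y ∈ p.2,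
          s(Sum.inl a, Sum.inr (Sum.inl b)) = s(x, y)))
        + L.countP (fun p => decide (∃ x ∈ p.1, ∃ y ∈ p.2,
          s(Sum.inr (Sum.inl a), Sum.inl b) = s(x, y)))
        ≤ L.countP ((fun p => decide (∃ x ∈ p.1, ∃ y ∈ p.2, s(a, b) = s(x, y)))
            ∘ fun p => (myproj p.1, myproj p.2)) := by
      apply aux_countP_add_le
      rintro ⟨X, Y⟩ hXY
      obtain ⟨hdisj, hadj⟩ := hbic _ hXY
      simp only [decide_eq_true_iff, Function.comp_apply, aux_pred_iff]
      refine ⟨?_, ?_, ?_⟩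
      · rintro (⟨h1, h2⟩ | ⟨h1, h2⟩)
        · exact Or.inl ⟨mem_myproj.2 (Or.inl h1), mem_myproj.2 (Or.inr h2)⟩
        · exact Or.inr ⟨mem_myproj.2 (Or.inr h1), mem_myproj.2 (Or.inl h2)⟩
      · rintro (⟨h1, h2⟩ | ⟨h1, h2⟩)
        · exact Or.inl ⟨mem_myproj.2 (Or.inr h1), mem_myproj.2 (Or.inl h2)⟩
        · exact Or.inr ⟨mem_myproj.2 (Or.inl h1), mem_myproj.2 (Or.inr h2)⟩
      · rintro ⟨(⟨h1, h2⟩ | ⟨h1, h2⟩), (⟨h3, h4⟩ | ⟨h3, h4⟩)⟩ <;>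
          · first
            | exact (myc_adj_tt G).1 (hadj _ ‹Sum.inr (Sum.inl a) ∈ X› _ ‹Sum.inr (Sum.inl b) ∈ Y›)
            | exact G.irrefl ((myc_adj_lt G).1
                (hadj _ ‹Sum.inl a ∈ X› _ ‹Sum.inr (Sum.inl a) ∈ Y›))
            | exact G.irrefl ((myc_adj_tl G).1
                (hadj _ ‹Sum.inr (Sum.inl b) ∈ X› _ ‹Sum.inl b ∈ Y›))
            | exact (myc_adj_tt G).1 (hadj _ ‹Sum.inr (Sum.inl b) ∈ X› _ ‹Sum.inr (Sum.inl a) ∈ Y›)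
    omega

/-- The lifted cover of the Mycielski graph. -/
def mylift (d : ℕ) (L : List (Finset V × Finset V)) :
    List (Finset (V ⊕ V ⊕ Unit) × Finset (V ⊕ V ⊕ Unit)) :=
  L.map (fun p => (p.1.image Sum.inl,
      p.2.image Sum.inl ∪ p.2.image (fun y => Sum.inr (Sum.inl y))))
    ++ L.map (fun p => (p.1.image (fun x => Sum.inr (Sum.inl x)), p.2.image Sum.inl))
    ++ List.replicate d (({Sum.inr (Sum.inr ())} : Finset (V ⊕ V ⊕ Unit)),
        (univ : Finset V).image (fun y => Sum.inr (Sum.inl y)))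

lemma upper_cover {d : ℕ} {L : List (Finset V × Finset V)}
    (h : G.IsBicliqueCover d L) :
    (mycielski G).IsBicliqueCover d (mylift d L) := by
  obtain ⟨hbic, hcov⟩ := h
  constructor
  · rintro p hp
    rw [mylift, List.append_assoc, List.mem_append, List.mem_append] at hp
    rcases hp with hp | hp | hp
    · rw [List.mem_map] at hp
      obtain ⟨⟨X, Y⟩, hXY, rfl⟩ := hp
      obtain ⟨hdisj, hadj⟩ := hbic _ hXY
      constructor
      · rw [Finset.disjoint_left]
        rintro w hw1 hw2
        simp only [Finset.mem_image, Finset.mem_union] at hw1 hw2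
        obtain ⟨x, hx, rfl⟩ := hw1
        rcases hw2 with ⟨y, hy, hxy⟩ | ⟨y, hy, hxy⟩
        · exact Finset.disjoint_left.1 hdisj hx (by cases Sum.inl_injective hxy; exact hy)
        · simp at hxy
      · rintro w hw1 z hw2
        simp only [Finset.mem_image, Finset.mem_union] at hw1 hw2
        obtain ⟨x, hx, rfl⟩ := hw1
        rcases hw2 with ⟨y, hy, rfl⟩ | ⟨y, hy, rfl⟩
        · exact hadj _ hx _ hy
        · exact hadj _ hx _ hy
    · rw [List.mem_map] at hp
      obtain ⟨⟨X, Y⟩, hXY, rfl⟩ := hp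
      obtain ⟨hdisj, hadj⟩ := hbic _ hXY
      constructor
      · rw [Finset.disjoint_left]
        rintro w hw1 hw2
        simp only [Finset.mem_image] at hw1 hw2
        obtain ⟨x, hx, rfl⟩ := hw1
        obtain ⟨y, hy, hxy⟩ := hw2
        simp at hxy
      · rintro w hw1 z hw2
        simp only [Finset.mem_image] at hw1 hw2
        obtain ⟨x, hx, rfl⟩ := hw1
        obtain ⟨y, hy, rfl⟩ := hw2
        exact hadj _ hx _ hy
    · rw [List.eq_of_mem_replicate hp]
      constructor
      · rw [Finset.disjoint_left]
        rintro w hw1 hw2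
        simp only [Finset.mem_singleton] at hw1
        subst hw1
        simp at hw2
      · rintro w hw1 z hw2
        simp only [Finset.mem_singleton] at hw1
        subst hw1
        simp only [Finset.mem_image] at hw2
        obtain ⟨y, _, rfl⟩ := hw2
        exact trivial
  · intro e he
    induction e using Sym2.ind with
    | _ p q =>
    rw [SimpleGraph.mem_edgeSet] at he
    rw [mylift, List.countP_append, List.countP_append, List.countP_map, List.countP_map,
      List.countP_replicate]
    rcases p with a | a | u1 <;> rcases q with b | b | u2
    · -- inl a, inl b
      have hab : G.Adj a b := he
      have h1 := hcov s(a, b) (G.mem_edgeSet.2 hab)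
      have h2 : L.countP (fun p => decide (∃ x ∈ p.1, ∃ y ∈ p.2, s(a, b) = s(x, y)))
          ≤ L.countP ((fun p => decide (∃ x ∈ p.1, ∃ y ∈ p.2, s(Sum.inl a, Sum.inl b) = s(x, y)))
            ∘ fun p => (p.1.image Sum.inl,
              p.2.image Sum.inl ∪ p.2.image (fun y => (Sum.inr (Sum.inl y) : V ⊕ V ⊕ Unit)))) := by
        apply List.countP_mono_left
        rintro ⟨X, Y⟩ hXY hP
        simp only [decide_eq_true_iff, Function.comp_apply, aux_pred_iff] at hP ⊢
        rcases hP with ⟨h1, h2⟩ | ⟨h1, h2⟩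
        · exact Or.inl ⟨Finset.mem_image_of_mem _ h1,
            Finset.mem_union_left _ (Finset.mem_image_of_mem _ h2)⟩
        · exact Or.inr ⟨Finset.mem_image_of_mem _ h1,
            Finset.mem_union_left _ (Finset.mem_image_of_mem _ h2)⟩
      omega
    · -- inl a, inr inl b
      have hab : G.Adj a b := he
      have h1 := hcov s(a, b) (G.mem_edgeSet.2 hab)
      have hor : L.countP (fun p => decide (∃ x ∈ p.1, ∃ y ∈ p.2, s(a, b) = s(x, y)))
          ≤ L.countP (fun p => decide (a ∈ p.1 ∧ b ∈ p.2))
            + L.countP (fun p => decide (b ∈ p.1 ∧ a ∈ p.2)) := by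
        refine le_trans (le_of_eq (List.countP_congr ?_)) (aux_countP_or_le L _ _)
        rintro ⟨X, Y⟩ hXY
        simp only [decide_eq_true_iff, aux_pred_iff, Bool.or_eq_true]
        try tauto
      have h2 : L.countP (fun p => decide (a ∈ p.1 ∧ b ∈ p.2))
          ≤ L.countP ((fun p => decide (∃ x ∈ p.1, ∃ y ∈ p.2,
              s(Sum.inl a, Sum.inr (Sum.inl b)) = s(x, y)))
            ∘ fun p => (p.1.image Sum.inl,
              p.2.image Sum.inl ∪ p.2.image (fun y => (Sum.inr (Sum.inl y) : V ⊕ V ⊕ Unit)))) := by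
        apply List.countP_mono_left
        rintro ⟨X, Y⟩ hXY hP
        simp only [decide_eq_true_iff, Function.comp_apply, aux_pred_iff] at hP ⊢
        exact Or.inl ⟨Finset.mem_image_of_mem _ hP.1,
          Finset.mem_union_right _ (Finset.mem_image_of_mem _ hP.2)⟩
      have h3 : L.countP (fun p => decide (b ∈ p.1 ∧ a ∈ p.2))
          ≤ L.countP ((fun p => decide (∃ x ∈ p.1, ∃ y ∈ p.2,
              s(Sum.inl a, Sum.inr (Sum.inl b)) = s(x, y)))
            ∘ fun p => (p.1.image (fun x => (Sum.inr (Sum.inl x) : V ⊕ V ⊕ Unit)),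
              p.2.image Sum.inl)) := by
        apply List.countP_mono_left
        rintro ⟨X, Y⟩ hXY hP
        simp only [decide_eq_true_iff, Function.comp_apply, aux_pred_iff] at hP ⊢
        exact Or.inr ⟨Finset.mem_image_of_mem _ hP.1, Finset.mem_image_of_mem _ hP.2⟩
      omega
    · exact (he : False).elim
    · -- inr inl a, inl b
      have hab : G.Adj a b := he
      have h1 := hcov s(a, b) (G.mem_edgeSet.2 hab)
      have hor : L.countP (fun p => decide (∃ x ∈ p.1, ∃ y ∈ p.2, s(a, b) = s(x, y)))
          ≤ L.countP (fun p => decide (b ∈ p.1 ∧ a ∈ p.2))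
            + L.countP (fun p => decide (a ∈ p.1 ∧ b ∈ p.2)) := by
        refine le_trans (le_of_eq (List.countP_congr ?_)) (aux_countP_or_le L _ _)
        rintro ⟨X, Y⟩ hXY
        simp only [decide_eq_true_iff, aux_pred_iff, Bool.or_eq_true]
        try tauto
      have h2 : L.countP (fun p => decide (b ∈ p.1 ∧ a ∈ p.2))
          ≤ L.countP ((fun p => decide (∃ x ∈ p.1, ∃ y ∈ p.2,
              s(Sum.inr (Sum.inl a), Sum.inl b) = s(x, y)))
            ∘ fun p => (p.1.image Sum.inl,
              p.2.image Sum.inl ∪ p.2.image (fun y => (Sum.inr (Sum.inl y) : V ⊕ V ⊕ Unit)))) := by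
        apply List.countP_mono_left
        rintro ⟨X, Y⟩ hXY hP
        simp only [decide_eq_true_iff, Function.comp_apply, aux_pred_iff] at hP ⊢
        exact Or.inr ⟨Finset.mem_image_of_mem _ hP.1,
          Finset.mem_union_right _ (Finset.mem_image_of_mem _ hP.2)⟩
      have h3 : L.countP (fun p => decide (a ∈ p.1 ∧ b ∈ p.2))
          ≤ L.countP ((fun p => decide (∃ x ∈ p.1, ∃ y ∈ p.2,
              s(Sum.inr (Sum.inl a), Sum.inl b) = s(x, y)))
            ∘ fun p => (p.1.image (fun x => (Sum.inr (Sum.inl x) : V ⊕ V ⊕ Unit)),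
              p.2.image Sum.inl)) := by
        apply List.countP_mono_left
        rintro ⟨X, Y⟩ hXY hP
        simp only [decide_eq_true_iff, Function.comp_apply, aux_pred_iff] at hP ⊢
        exact Or.inl ⟨Finset.mem_image_of_mem _ hP.1, Finset.mem_image_of_mem _ hP.2⟩
      omega
    · exact (he : False).elim
    · -- inr inl a, inr inr u2
      split
      · omega
      · rename_i hfalse
        exfalso
        apply hfalse
        simp only [decide_eq_true_iff]
        exact ⟨Sum.inr (Sum.inr ()), by simp, Sum.inr (Sum.inl a), by simp,
          by cases u2; rw [Sym2.eq_swap]⟩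
    · exact (he : False).elim
    · -- inr inr u1, inr inl b
      split
      · omega
      · rename_i hfalse
        exfalso
        apply hfalse
        simp only [decide_eq_true_iff]
        exact ⟨Sum.inr (Sum.inr ()), by simp, Sum.inr (Sum.inl b), by simp, by cases u1; rfl⟩
    · exact (he : False).elim

lemma mylift_length (d : ℕ) (L : List (Finset V × Finset V)) :
    (mylift d L).length = 2 * L.length + d := by
  simp [mylift]; omega

end Main

theorem stmt_16 {V : Type*} [Fintype V] [DecidableEq V] (G : SimpleGraph V)
    (d : ℕ) (hd : 0 < d) :
    G.bcd (2 * d) ≤ (mycielski G).bcd d ∧ (mycielski G).bcd d ≤ 2 * G.bcd d + d := by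
  classical
  have hM : {n | ∃ L, (mycielski G).IsBicliqueCover d L ∧ L.length = n}.Nonempty := by
    obtain ⟨L, hL⟩ := aux_exists_cover (mycielski G) d
    exact ⟨L.length, L, hL, rfl⟩
  have hG : {n | ∃ L, G.IsBicliqueCover d L ∧ L.length = n}.Nonempty := by
    obtain ⟨L, hL⟩ := aux_exists_cover G d
    exact ⟨L.length, L, hL, rfl⟩
  simp only [SimpleGraph.bcd]
  constructor
  · obtain ⟨L, hL, hlen⟩ := Nat.sInf_mem hM
    refine Nat.sInf_le ⟨_, lower_cover G hL, ?_⟩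
    simpa using hlen
  · obtain ⟨L, hL, hlen⟩ := Nat.sInf_mem hG
    refine Nat.sInf_le ⟨_, upper_cover G hL, ?_⟩
    rw [mylift_length, hlen]
end
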